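/- arXiv:1508.00093 — 2 statements merged into one kernel-verified Lean document; each statement's English description precedes it below -/
import Mathlib

section
/- If P₀ —τ→ P₁ —τ→ ⋯ —τ→ Pₙ is a sequence of internal actions of π-processes with Pₙ = P₀ (absolute equality), then P₀ = P₁ = ⋯ = Pₙ, i.e., all processes along the sequence are absolutely equal. -/
set_option linter.unusedVariables false

/-! Core formalization of the π-calculus with name dichotomy.
Names are natural numbers; name variables are natural numbers (kept disjoint
via the sum-like type `NV`). -/

abbrev Name := ℕ

/-- Names and name variables. -/
inductive NV : Type
  | nm : Name → NV
  | vr : ℕ → NV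
  deriving DecidableEq

/-- π-terms.  Input and output choices have a finite index set `Fin k`. -/
inductive Term : Type
  | nil : Term
  | inp : NV → ℕ → (k : ℕ) → (Fin k → Term) → Term          -- Σ_{i∈I} n(x).T_i
  | out : NV → (k : ℕ) → (Fin k → NV) → (Fin k → Term) → Term -- Σ_{i∈I} n̄ m_i.T_i
  | par : Term → Term → Term
  | res : Name → Term → Term
  | mat : NV → NV → Term → Term
  | mis : NV → NV → Term → Term
  | repInp : NV → ℕ → Term → Term                             -- !n(x).T
  | repOut : NV → NV → Term → Term                            -- !n̄m.T

namespace NV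

/-- Apply a map on variables. -/
def sub (σ : ℕ → NV) : NV → NV
  | nm a => nm a
  | vr x => σ x

/-- Apply a map on names. -/
def ren (α : Name → Name) : NV → NV
  | nm a => nm (α a)
  | vr x => vr x

def vars : NV → Set ℕ
  | nm _ => ∅
  | vr x => {x}

def names : NV → Set Name
  | nm a => {a}
  | vr _ => ∅

end NV

namespace Term

/-- Apply a substitution (a map from name variables to names-or-variables),
    not substituting bound occurrences. -/
def applyVar (σ : ℕ → NV) : Term → Term
  | nil => nil
  | inp n x k Ts => inp (n.sub σ) x k (fun i => (Ts i).applyVar (Function.update σ x (NV.vr x)))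
  | out n k ms Ts => out (n.sub σ) k (fun i => (ms i).sub σ) (fun i => (Ts i).applyVar σ)
  | par S T => par (S.applyVar σ) (T.applyVar σ)
  | res c T => res c (T.applyVar σ)
  | mat p q T => mat (p.sub σ) (q.sub σ) (T.applyVar σ)
  | mis p q T => mis (p.sub σ) (q.sub σ) (T.applyVar σ)
  | repInp n x T => repInp (n.sub σ) x (T.applyVar (Function.update σ x (NV.vr x)))
  | repOut n m T => repOut (n.sub σ) (m.sub σ) (T.applyVar σ)

/-- Substitute the single name `c` for the name variable `x`: `T{c/x}`. -/
def subst1 (x : ℕ) (c : Name) (T : Term) : Term :=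
  T.applyVar (fun y => if y = x then NV.nm c else NV.vr y)

/-- Apply an assignment (a total map from name variables to names). -/
def assign (ρ : ℕ → Name) (T : Term) : Term :=
  T.applyVar (fun x => NV.nm (ρ x))

/-- Apply a renaming to all names of a term. -/
def applyName (α : Name → Name) : Term → Term
  | nil => nil
  | inp n x k Ts => inp (n.ren α) x k (fun i => (Ts i).applyName α)
  | out n k ms Ts => out (n.ren α) k (fun i => (ms i).ren α) (fun i => (Ts i).applyName α)
  | par S T => par (S.applyName α) (T.applyName α)
  | res c T => res (α c) (T.applyName α)
  | mat p q T => mat (p.ren α) (q.ren α) (T.applyName α)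
  | mis p q T => mis (p.ren α) (q.ren α) (T.applyName α)
  | repInp n x T => repInp (n.ren α) x (T.applyName α)
  | repOut n m T => repOut (n.ren α) (m.ren α) (T.applyName α)

/-- Free name variables. -/
def fvar : Term → Set ℕ
  | nil => ∅
  | inp n x k Ts => n.vars ∪ ((⋃ i, (Ts i).fvar) \ {x})
  | out n k ms Ts => n.vars ∪ (⋃ i, (ms i).vars ∪ (Ts i).fvar)
  | par S T => S.fvar ∪ T.fvar
  | res _ T => T.fvar
  | mat p q T => p.vars ∪ q.vars ∪ T.fvar
  | mis p q T => p.vars ∪ q.vars ∪ T.fvar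
  | repInp n x T => n.vars ∪ (T.fvar \ {x})
  | repOut n m T => n.vars ∪ m.vars ∪ T.fvar

/-- Global (non-local) names. -/
def gname : Term → Set Name
  | nil => ∅
  | inp n _ k Ts => n.names ∪ (⋃ i, (Ts i).gname)
  | out n k ms Ts => n.names ∪ (⋃ i, (ms i).names ∪ (Ts i).gname)
  | par S T => S.gname ∪ T.gname
  | res c T => T.gname \ {c}
  | mat p q T => p.names ∪ q.names ∪ T.gname
  | mis p q T => p.names ∪ q.names ∪ T.gname
  | repInp n _ T => n.names ∪ T.gname
  | repOut n m T => n.names ∪ m.names ∪ T.gname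

end Term

/-- A π-process is a closed π-term. -/
def Closed (P : Term) : Prop := P.fvar = ∅

def IsProc (P : Term) : Prop := Closed P

/-- Labels (external actions). -/
inductive Label : Type
  | inp : Name → Name → Label      -- ab
  | out : Name → Name → Label      -- āb
  | bout : Name → Name → Label     -- ā(c)
  deriving DecidableEq

def Label.names : Label → Set Name
  | .inp a b => {a, b}
  | .out a b => {a, b}
  | .bout a c => {a, c}

def Label.ren (α : Name → Name) : Label → Label
  | .inp a b => .inp (α a) (α b)
  | .out a b => .out (α a) (α b)
  | .bout a c => .bout (α a) (α c)

/-- Actions: internal action τ or a label. -/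
inductive Act : Type
  | tau : Act
  | lab : Label → Act

def Act.names : Act → Set Name
  | .tau => ∅
  | .lab ℓ => ℓ.names

def Act.ren (α : Name → Name) : Act → Act
  | .tau => .tau
  | .lab ℓ => .lab (ℓ.ren α)

/-- The labelled transition system of the π-calculus. -/
inductive Step : Term → Act → Term → Prop
  | inp {a : Name} {x : ℕ} {k : ℕ} {Ts : Fin k → Term} (i : Fin k) (c : Name) :
      Step (.inp (.nm a) x k Ts) (.lab (.inp a c)) ((Ts i).subst1 x c)
  | out {a : Name} {k : ℕ} {ms : Fin k → NV} {Ts : Fin k → Term} (i : Fin k) {c : Name}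
      (h : ms i = .nm c) :
      Step (.out (.nm a) k ms Ts) (.lab (.out a c)) (Ts i)
  | parR {S T T' : Term} {μ : Act} :
      Step T μ T' → Step (.par S T) μ (.par S T')
  | parL {S S' T : Term} {μ : Act} :
      Step S μ S' → Step (.par S T) μ (.par S' T)
  | commL {S S' T T' : Term} {a b : Name} :
      Step S (.lab (.inp a b)) S' → Step T (.lab (.out a b)) T' →
      Step (.par S T) .tau (.par S' T')
  | commR {S S' T T' : Term} {a b : Name} :
      Step S (.lab (.out a b)) S' → Step T (.lab (.inp a b)) T' →
      Step (.par S T) .tau (.par S' T')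
  | closeL {S S' T T' : Term} {a c : Name} :
      Step S (.lab (.inp a c)) S' → Step T (.lab (.bout a c)) T' →
      Step (.par S T) .tau (.res c (.par S' T'))
  | closeR {S S' T T' : Term} {a c : Name} :
      Step S (.lab (.bout a c)) S' → Step T (.lab (.inp a c)) T' →
      Step (.par S T) .tau (.res c (.par S' T'))
  | open_ {T T' : Term} {a c : Name} :
      Step T (.lab (.out a c)) T' → Step (.res c T) (.lab (.bout a c)) T'
  | resStep {T T' : Term} {μ : Act} {c : Name} :
      Step T μ T' → c ∉ μ.names → Step (.res c T) μ (.res c T')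
  | matStep {T T' : Term} {μ : Act} {a : Name} :
      Step T μ T' → Step (.mat (.nm a) (.nm a) T) μ T'
  | misStep {T T' : Term} {μ : Act} {a b : Name} :
      a ≠ b → Step T μ T' → Step (.mis (.nm a) (.nm b) T) μ T'
  | repOutStep {a b : Name} {T : Term} :
      Step (.repOut (.nm a) (.nm b) T) (.lab (.out a b)) (.par T (.repOut (.nm a) (.nm b) T))
  | repInpStep {a : Name} {x : ℕ} {T : Term} (b : Name) :
      Step (.repInp (.nm a) x T) (.lab (.inp a b)) (.par (T.subst1 x b) (.repInp (.nm a) x T))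

/-- Internal action. -/
def Tau (P Q : Term) : Prop := Step P .tau Q

/-- `P ⟹ Q` : reflexive and transitive closure of τ. -/
def WeakTau : Term → Term → Prop := Relation.ReflTransGen Tau

/-- `P ⇓` : observability. -/
def Obs (P : Term) : Prop := ∃ P' ℓ P'', WeakTau P P' ∧ Step P' (.lab ℓ) P''

abbrev PRel : Type := Term → Term → Prop

def OnProc (R : PRel) : Prop := ∀ P Q, R P Q → IsProc P ∧ IsProc Q

def ReflProc (R : PRel) : Prop := ∀ P, IsProc P → R P P

def Equipollent (R : PRel) : Prop := ∀ P Q, R P Q → (Obs P ↔ Obs Q)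

def Extensional (R : PRel) : Prop :=
  (∀ L M P Q, R L M → R P Q → R (.par L P) (.par M Q)) ∧
  (∀ P Q c, R P Q → R (.res c P) (.res c Q))

/-- An infinite τ-sequence. -/
def TauSeq (f : ℕ → Term) : Prop := ∀ n, Tau (f n) (f (n + 1))

/-- `P —τ→⟹ P'`. -/
def TauWeak (P P' : Term) : Prop := ∃ P₀, Tau P P₀ ∧ WeakTau P₀ P'

def Codivergent (R : PRel) : Prop := ∀ P Q, R P Q →
  ((∀ f : ℕ → Term, f 0 = Q → TauSeq f →
      ∃ k, 1 ≤ k ∧ ∃ P', TauWeak P P' ∧ R P' (f k)) ∧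
   (∀ f : ℕ → Term, f 0 = P → TauSeq f →
      ∃ k, 1 ≤ k ∧ ∃ Q', TauWeak Q Q' ∧ R Q' (f k)))

/-- Branching-style bisimulation. -/
def Bisim (R : PRel) : Prop := ∀ P Q, R P Q →
  ((∀ Q', Tau Q Q' →
      (∃ P', WeakTau P P' ∧ R P' Q ∧ R P' Q') ∨
      (∃ P'' P', WeakTau P P'' ∧ R P'' Q ∧ Tau P'' P' ∧ R P' Q')) ∧
   (∀ P', Tau P P' →
      (∃ Q', WeakTau Q Q' ∧ R P Q' ∧ R P' Q') ∨
      (∃ Q'' Q', WeakTau Q Q'' ∧ R P Q'' ∧ Tau Q'' Q' ∧ R P' Q')))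

/-- A relation qualifying for the absolute equality. -/
def GoodAbs (R : PRel) : Prop :=
  OnProc R ∧ ReflProc R ∧ Equipollent R ∧ Extensional R ∧ Codivergent R ∧ Bisim R

/-- The absolute equality: the largest reflexive, equipollent, extensional,
codivergent bisimulation on π-processes. -/
def AbsEq (P Q : Term) : Prop := ∃ R : PRel, GoodAbs R ∧ R P Q

/-!
Let `R` witness `Pₙ = P₀`. Simulating `P₀ ⟹ Pⱼ` from `Pₙ` gives `Pₙ ⟹ Aⱼ` with `Aⱼ R Pⱼ`; since
every `Pᵢ` reaches `Pₙ`, each `Pᵢ` weakly reaches a process related to each `Pⱼ`. So all pairs lie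
in the relation "`P ⟹ P' ≍ Q` and `Q ⟹ Q' ≍ P`", where `≍` is the equivalence closure of `R` on
processes, and this relation is again a reflexive, equipollent, extensional, codivergent
bisimulation. The delicate point is the codivergence of `≍`: along a chain from `X` to `Y` of
processes related by `R` in either direction, an infinite τ-sequence from `Y` is transported back
one link at a time, concatenating the finite detours granted by codivergence into an infinite
τ-sequence that keeps returning to related states.
-/

open Relation

lemma weakTau_of_tau_succ {f : ℕ → Term} {i j : ℕ} (hij : i ≤ j)
    (h : ∀ k ∈ Set.Ico i j, Tau (f k) (f (k + 1))) : WeakTau (f i) (f j) :=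
  ReflTransGen.lift f (fun _ _ hk => hk) _ _
    (reflTransGen_of_succ_of_le (fun a b => Tau (f a) (f b)) (by simpa using h) hij)

lemma TauSeq.weakTau {g : ℕ → Term} (hg : TauSeq g) {i j : ℕ} (hij : i ≤ j) :
    WeakTau (g i) (g j) :=
  weakTau_of_tau_succ hij fun k _ => hg k

lemma TauSeq.shift {g : ℕ → Term} (hg : TauSeq g) (j : ℕ) : TauSeq fun m => g (j + m) :=
  fun m => hg (j + m)

lemma WeakTau.trans_tauWeak {A B C : Term} (hAB : WeakTau A B) (hBC : TauWeak B C) :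
    TauWeak A C := by
  obtain ⟨D, hBD, hDC⟩ := hBC
  rcases ReflTransGen.cases_head hAB with rfl | ⟨A₁, hAA₁, hA₁B⟩
  · exact ⟨D, hBD, hDC⟩
  · exact ⟨A₁, hAA₁, hA₁B.trans (hDC.head hBD)⟩

lemma TauWeak.trans_weakTau {A B C : Term} (hAB : TauWeak A B) (hBC : WeakTau B C) :
    TauWeak A C := by
  obtain ⟨D, hAD, hDB⟩ := hAB
  exact ⟨D, hAD, hDB.trans hBC⟩

lemma Obs.of_weakTau {P Q : Term} (hPQ : WeakTau P Q) (hQ : Obs Q) : Obs P := by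
  obtain ⟨Q', ℓ, Q'', hQQ', hstep⟩ := hQ
  exact ⟨Q', ℓ, Q'', hPQ.trans hQQ', hstep⟩

lemma WeakTau.par {L L' P P' : Term} (hL : WeakTau L L') (hP : WeakTau P P') :
    WeakTau (.par L P) (.par L' P') :=
  (ReflTransGen.lift (fun X => Term.par X P) (fun _ _ => Step.parL) _ _ hL).trans
    (ReflTransGen.lift (Term.par L') (fun _ _ => Step.parR) _ _ hP)

lemma WeakTau.res {P P' : Term} (c : Name) (h : WeakTau P P') :
    WeakTau (.res c P) (.res c P') :=
  ReflTransGen.lift (Term.res c) (fun _ _ hτ => Step.resStep hτ (by simp [Act.names])) _ _ h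

lemma WeakTau.exists_path {A B : Term} (h : WeakTau A B) :
    ∃ q, ∃ p : ℕ → Term, p 0 = A ∧ p q = B ∧ ∀ l < q, Tau (p l) (p (l + 1)) := by
  induction h with
  | refl => exact ⟨0, fun _ => A, rfl, rfl, by omega⟩
  | @tail B₁ B _ hB₁B ih =>
    obtain ⟨q, p, hp0, hpq, hpath⟩ := ih
    refine ⟨q + 1, fun l => if l ≤ q then p l else B, by simpa using hp0, by simp, ?_⟩
    intro l hl
    rcases Nat.lt_succ_iff_lt_or_eq.mp hl with hl | rfl
    · simpa [hl.le, Nat.succ_le_of_lt hl] using hpath l hl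
    · simpa [hpq] using hB₁B

lemma TauWeak.exists_path {A B : Term} (h : TauWeak A B) :
    ∃ q, 1 ≤ q ∧ ∃ p : ℕ → Term, p 0 = A ∧ p q = B ∧ ∀ l < q, Tau (p l) (p (l + 1)) := by
  obtain ⟨C, hAC, hCB⟩ := h
  obtain ⟨q, p, hp0, hpq, hpath⟩ := hCB.exists_path
  refine ⟨q + 1, by omega, fun | 0 => A | l + 1 => p l, rfl, hpq, ?_⟩
  rintro (_ | l) hl
  · simpa [hp0] using hAC
  · exact hpath l (by omega)

section Concat

/-- Walking along consecutive paths of lengths `q 0, q 1, …`: the position `(m, l)` is the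
`l`-th state of the `m`-th path. -/
def nextPos (q : ℕ → ℕ) (s : ℕ × ℕ) : ℕ × ℕ :=
  if s.2 + 1 < q s.1 then (s.1, s.2 + 1) else (s.1 + 1, 0)

variable {q : ℕ → ℕ}

lemma nextPos_snd_lt (hq : ∀ m, 1 ≤ q m) (i : ℕ) :
    ((nextPos q)^[i] (0, 0)).2 < q ((nextPos q)^[i] (0, 0)).1 := by
  induction i with
  | zero => exact hq 0
  | succ i _ =>
    rw [Function.iterate_succ_apply', nextPos]
    split_ifs with h
    · exact h
    · exact hq _

lemma nextPos_iterate_of_lt {m l : ℕ} (hl : l < q m) : (nextPos q)^[l] (m, 0) = (m, l) := by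
  induction l with
  | zero => rfl
  | succ l ih => rw [Function.iterate_succ_apply', ih (by omega), nextPos, if_pos hl]

lemma nextPos_iterate_self (hq : ∀ m, 1 ≤ q m) (m : ℕ) :
    (nextPos q)^[q m] (m, 0) = (m + 1, 0) := by
  obtain ⟨l, hl⟩ : ∃ l, q m = l + 1 := ⟨q m - 1, by have := hq m; omega⟩
  rw [hl, Function.iterate_succ_apply', nextPos_iterate_of_lt (by omega)]
  simp [nextPos, hl]

lemma exists_nextPos_iterate_eq (hq : ∀ m, 1 ≤ q m) (m : ℕ) :
    ∃ i ≥ m, (nextPos q)^[i] (0, 0) = (m, 0) := by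
  induction m with
  | zero => exact ⟨0, le_rfl, rfl⟩
  | succ m ih =>
    obtain ⟨i, hi, hpos⟩ := ih
    refine ⟨q m + i, by have := hq m; omega, ?_⟩
    rw [Function.iterate_add_apply, hpos, nextPos_iterate_self hq]

end Concat

lemma exists_tauSeq_through {u : ℕ → Term} (hu : ∀ m, TauWeak (u m) (u (m + 1))) :
    ∃ h : ℕ → Term, TauSeq h ∧ h 0 = u 0 ∧ ∀ m, ∃ i ≥ m, h i = u m := by
  choose q hq p hp0 hpq hpath using fun m => (hu m).exists_path
  let pos : ℕ → ℕ × ℕ := fun i => (nextPos q)^[i] (0, 0)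
  refine ⟨fun i => p (pos i).1 (pos i).2, fun i => ?_, hp0 0, fun m => ?_⟩
  · have hlt : (pos i).2 < q (pos i).1 := nextPos_snd_lt hq i
    change Tau (p (pos i).1 (pos i).2) (p (pos (i + 1)).1 (pos (i + 1)).2)
    rw [show pos (i + 1) = nextPos q (pos i) from Function.iterate_succ_apply' _ _ _, nextPos]
    split_ifs with h
    · exact hpath _ _ hlt
    · have hlast : (pos i).2 + 1 = q (pos i).1 := by omega
      rw [hp0, ← hpq, ← hlast]
      exact hpath _ _ hlt
  · obtain ⟨i, hi, hpos⟩ := exists_nextPos_iterate_eq hq m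
    exact ⟨i, hi, by simp only [pos, hpos, hp0]⟩

/-- One half of a branching bisimulation: `P` answers the τ-steps of `Q`. -/
def TauSim (R : PRel) (P Q : Term) : Prop :=
  ∀ Q', Tau Q Q' →
    (∃ P', WeakTau P P' ∧ R P' Q ∧ R P' Q') ∨
    (∃ P'' P', WeakTau P P'' ∧ R P'' Q ∧ Tau P'' P' ∧ R P' Q')

/-- One half of codivergence: `P` answers the divergences of `Q`. -/
def DivSim (R : PRel) (P Q : Term) : Prop :=
  ∀ g : ℕ → Term, g 0 = Q → TauSeq g → ∃ k, 1 ≤ k ∧ ∃ P', TauWeak P P' ∧ R P' (g k)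

section Simulation

variable {R R' : PRel}

lemma TauSim.mono (hRR' : R ≤ R') {P Q : Term} (h : TauSim R P Q) : TauSim R' P Q := by
  intro Q' hQQ'
  rcases h Q' hQQ' with ⟨P', hPP', h₁, h₂⟩ | ⟨P'', P', hPP'', h₁, hτ, h₂⟩
  · exact .inl ⟨P', hPP', hRR' _ _ h₁, hRR' _ _ h₂⟩
  · exact .inr ⟨P'', P', hPP'', hRR' _ _ h₁, hτ, hRR' _ _ h₂⟩

lemma TauSim.of_weakTau {P P₀ Q : Term} (hPP₀ : WeakTau P P₀) (h : TauSim R P₀ Q) :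
    TauSim R P Q := by
  intro Q' hQQ'
  rcases h Q' hQQ' with ⟨P', hP₀P', h₁, h₂⟩ | ⟨P'', P', hP₀P'', h₁, hτ, h₂⟩
  · exact .inl ⟨P', hPP₀.trans hP₀P', h₁, h₂⟩
  · exact .inr ⟨P'', P', hPP₀.trans hP₀P'', h₁, hτ, h₂⟩

lemma DivSim.mono (hRR' : R ≤ R') {P Q : Term} (h : DivSim R P Q) : DivSim R' P Q := by
  intro g hg0 hg
  obtain ⟨k, hk, P', hPP', hR⟩ := h g hg0 hg
  exact ⟨k, hk, P', hPP', hRR' _ _ hR⟩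

lemma DivSim.of_weakTau {P P₀ Q : Term} (hPP₀ : WeakTau P P₀) (h : DivSim R P₀ Q) :
    DivSim R P Q := by
  intro g hg0 hg
  obtain ⟨k, hk, P', hP₀P', hR⟩ := h g hg0 hg
  exact ⟨k, hk, P', hPP₀.trans_tauWeak hP₀P', hR⟩

lemma bisim_of_tauSim [Std.Symm R] (h : ∀ P Q, R P Q → TauSim R P Q) : Bisim R := by
  intro P Q hPQ
  have hflip : TauSim (flip R) Q P := Std.Symm.flip_eq (r := R) ▸ h Q P (symm hPQ)
  exact ⟨h P Q hPQ, hflip⟩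

lemma codivergent_of_divSim [Std.Symm R] (h : ∀ P Q, R P Q → DivSim R P Q) :
    Codivergent R :=
  fun P Q hPQ => ⟨h P Q hPQ, h Q P (symm hPQ)⟩

lemma Bisim.tauSim_symmGen (hR : Bisim R) {P Q : Term} :
    SymmGen R P Q → TauSim (SymmGen R) P Q
  | .inl hPQ => TauSim.mono (fun _ _ => SymmGen.of_rel) (hR P Q hPQ).1
  | .inr hQP => TauSim.mono (R := flip R) (fun _ _ => SymmGen.of_rel_symm) (hR Q P hQP).2

/-- The second half of `Codivergent` relates the answer to the sequence in the same order as the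
first, so `R` itself answers divergences across both orientations. -/
lemma Codivergent.divSim_symmGen (hR : Codivergent R) {P Q : Term} :
    SymmGen R P Q → DivSim R P Q
  | .inl hPQ => (hR P Q hPQ).1
  | .inr hQP => (hR Q P hQP).2

lemma exists_weakTau_of_tauSim (hR : ∀ P Q, R P Q → TauSim R P Q) {A B B' : Term}
    (hAB : R A B) (hBB' : WeakTau B B') : ∃ A', WeakTau A A' ∧ R A' B' := by
  induction hBB' with
  | refl => exact ⟨A, .refl, hAB⟩
  | @tail B₁ B' _ hτ ih =>
    obtain ⟨A₁, hAA₁, hA₁⟩ := ih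
    rcases hR A₁ B₁ hA₁ B' hτ with ⟨A', hA₁A', -, hA'⟩ | ⟨A'', A', hA₁A'', -, hτ', hA'⟩
    · exact ⟨A', hAA₁.trans hA₁A', hA'⟩
    · exact ⟨A', hAA₁.trans (hA₁A''.tail hτ'), hA'⟩

end Simulation

section TransGen

variable {E : PRel} (hB : ∀ P Q, E P Q → TauSim E P Q)
include hB

lemma tauSim_transGen {P Q : Term} (hPQ : TransGen E P Q) : TauSim (TransGen E) P Q := by
  induction hPQ using TransGen.head_induction_on with
  | single h => exact (hB _ _ h).mono fun _ _ => TransGen.single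
  | @head X Z hXZ hZY ih =>
    intro Y' hYY'
    rcases ih Y' hYY' with ⟨Z₁, hZZ₁, h₁, h₂⟩ | ⟨Z₂, Z₁, hZZ₂, h₁, hτ, h₂⟩
    · obtain ⟨X₁, hXX₁, hX₁⟩ := exists_weakTau_of_tauSim hB hXZ hZZ₁
      exact .inl ⟨X₁, hXX₁, h₁.head hX₁, h₂.head hX₁⟩
    · obtain ⟨X₂, hXX₂, hX₂⟩ := exists_weakTau_of_tauSim hB hXZ hZZ₂
      rcases hB X₂ Z₂ hX₂ Z₁ hτ with ⟨X₃, hX₂X₃, e₂, e₁⟩ | ⟨X₄, X₃, hX₂X₄, e₂, hτ', e₁⟩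
      · exact .inl ⟨X₃, hXX₂.trans hX₂X₃, h₁.head e₂, h₂.head e₁⟩
      · exact .inr ⟨X₄, X₃, hXX₂.trans hX₂X₄, h₁.head e₂, hτ', h₂.head e₁⟩

variable (hC : ∀ P Q, E P Q → DivSim E P Q)
include hC

lemma exists_tauWeak_rel_mem {g : ℕ → Term} (hg : TauSeq g) {J : Set ℕ}
    (hJ : ∀ M, ∃ j ≥ M, j ∈ J) {a : Term} {j : ℕ} (ha : E a (g j)) :
    ∃ a' j', j' ∈ J ∧ TauWeak a a' ∧ E a' (g j') := by
  obtain ⟨k, -, a₁, haa₁, ha₁⟩ := hC a (g j) ha (fun m => g (j + m)) rfl (hg.shift j)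
  obtain ⟨j', hj', hj'J⟩ := hJ (j + k)
  obtain ⟨a', ha₁a', ha'⟩ := exists_weakTau_of_tauSim hB ha₁ (hg.weakTau hj')
  exact ⟨a', j', hj'J, haa₁.trans_weakTau ha₁a', ha'⟩

lemma exists_tauSeq_rel_mem {g : ℕ → Term} (hg : TauSeq g) {J : ℕ → Set ℕ}
    (hJ : ∀ N M, ∃ j ≥ M, j ∈ J N) {X : Term} (hX : E X (g 0)) :
    ∃ h : ℕ → Term, TauSeq h ∧ h 0 = X ∧ ∀ N, ∃ i ≥ N, ∃ j ∈ J N, E (h i) (g j) := by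
  let State := {s : Term × ℕ // E s.1 (g s.2)}
  have hnext : ∀ (N : ℕ) (s : State), ∃ s' : State, s'.1.2 ∈ J N ∧ TauWeak s.1.1 s'.1.1 := by
    intro N s
    obtain ⟨a', j', hj', haa', ha'⟩ := exists_tauWeak_rel_mem hB hC hg (hJ N) s.2
    exact ⟨⟨(a', j'), ha'⟩, hj', haa'⟩
  choose next hnextJ hnextτ using hnext
  let v : ℕ → State := fun m => Nat.rec ⟨(X, 0), hX⟩ (fun m s => next m s) m
  obtain ⟨h, hh, hh0, hthrough⟩ := exists_tauSeq_through (u := fun m => (v m).1.1)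
    fun m => hnextτ m (v m)
  refine ⟨h, hh, hh0, fun N => ?_⟩
  obtain ⟨i, hi, hiv⟩ := hthrough (N + 1)
  exact ⟨i, by omega, (v (N + 1)).1.2, hnextJ N (v N), hiv ▸ (v (N + 1)).2⟩

lemma exists_tauSeq_transGen {X Y : Term} (hXY : TransGen E X Y) {g : ℕ → Term}
    (hg : TauSeq g) (hg0 : g 0 = Y) :
    ∃ h : ℕ → Term, TauSeq h ∧ h 0 = X ∧ ∀ N, ∃ i ≥ N, ∃ k ≥ N, TransGen E (h i) (g k) := by
  induction hXY using TransGen.head_induction_on with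
  | single hXY =>
    obtain ⟨h, hh, hh0, hrel⟩ := exists_tauSeq_rel_mem hB hC hg (J := fun N => Set.Ici N)
      (fun N M => ⟨max N M, le_max_right N M, le_max_left N M⟩) (hg0 ▸ hXY)
    refine ⟨h, hh, hh0, fun N => ?_⟩
    obtain ⟨i, hi, k, hk, hE⟩ := hrel N
    exact ⟨i, hi, k, hk, .single hE⟩
  | head hXZ _ ih =>
    obtain ⟨hZ, hhZ, hZ0, hZrel⟩ := ih
    have hJ : ∀ N M, ∃ j ≥ M, ∃ k ≥ N, TransGen E (hZ j) (g k) := by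
      intro N M
      obtain ⟨j, hj, k, hk, hr⟩ := hZrel (max N M)
      exact ⟨j, le_of_max_le_right hj, k, le_of_max_le_left hk, hr⟩
    obtain ⟨h, hh, hh0, hrel⟩ := exists_tauSeq_rel_mem hB hC hhZ hJ (hZ0 ▸ hXZ)
    refine ⟨h, hh, hh0, fun N => ?_⟩
    obtain ⟨i, hi, j, ⟨k, hk, hr⟩, hE⟩ := hrel N
    exact ⟨i, hi, k, hk, hr.head hE⟩

lemma divSim_transGen {P Q : Term} (hPQ : TransGen E P Q) : DivSim (TransGen E) P Q := by
  intro g hg0 hg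
  obtain ⟨h, hh, hh0, hrel⟩ := exists_tauSeq_transGen hB hC hPQ hg hg0
  obtain ⟨i, hi, k, hk, hr⟩ := hrel 1
  exact ⟨k, hk, h i, ⟨h 1, hh0 ▸ hh 0, hh.weakTau hi⟩, hr⟩

end TransGen

section Closure

variable {R : PRel}

lemma OnProc.transGen_symmGen (hR : OnProc R) : OnProc (TransGen (SymmGen R)) := by
  have hsymm : OnProc (SymmGen R) := fun P Q h => h.elim (hR P Q) fun h => (hR Q P h).symm
  intro P Q h
  obtain ⟨Z, hPZ, -⟩ := TransGen.head'_iff.mp h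
  obtain ⟨Z', -, hZ'Q⟩ := TransGen.tail'_iff.mp h
  exact ⟨(hsymm P Z hPZ).1, (hsymm Z' Q hZ'Q).2⟩

lemma Equipollent.transGen_symmGen (hR : Equipollent R) :
    Equipollent (TransGen (SymmGen R)) := by
  have hsymm : Equipollent (SymmGen R) := fun P Q h => h.elim (hR P Q) fun h => (hR Q P h).symm
  intro P Q h
  induction h with
  | single h => exact hsymm _ _ h
  | tail _ h ih => exact ih.trans (hsymm _ _ h)

lemma transGen_symmGen_map {F : Term → Term} (hF : ∀ X Y, R X Y → R (F X) (F Y)) {X Y : Term}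
    (h : TransGen (SymmGen R) X Y) : TransGen (SymmGen R) (F X) (F Y) :=
  TransGen.lift F (fun a b (hab : SymmGen R a b) => hab.imp (hF a b) (hF b a)) _ _ h

lemma Extensional.transGen_symmGen (hOn : OnProc R) (hRefl : ReflProc R) (hExt : Extensional R) :
    Extensional (TransGen (SymmGen R)) := by
  refine ⟨fun L M P Q hLM hPQ => ?_, fun P Q c h => transGen_symmGen_map (hExt.2 · · c) h⟩
  have hP := (hOn.transGen_symmGen P Q hPQ).1
  have hM := (hOn.transGen_symmGen L M hLM).2
  exact (transGen_symmGen_map (F := (Term.par · P)) (fun X Y h => hExt.1 X Y P P h (hRefl P hP))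
    hLM).trans (transGen_symmGen_map (fun X Y h => hExt.1 M M X Y (hRefl M hM) h) hPQ)

lemma GoodAbs.transGen_symmGen (hR : GoodAbs R) : GoodAbs (TransGen (SymmGen R)) := by
  obtain ⟨hOn, hRefl, hEq, hExt, hCod, hBis⟩ := hR
  have hB : ∀ P Q, SymmGen R P Q → TauSim (SymmGen R) P Q := fun _ _ => hBis.tauSim_symmGen
  have hC : ∀ P Q, SymmGen R P Q → DivSim (SymmGen R) P Q := fun _ _ h =>
    (hCod.divSim_symmGen h).mono fun _ _ => SymmGen.of_rel
  exact ⟨hOn.transGen_symmGen, fun P hP => .single (.of_rel (hRefl P hP)),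
    hEq.transGen_symmGen, hExt.transGen_symmGen hOn hRefl,
    codivergent_of_divSim fun _ _ => divSim_transGen hB hC,
    bisim_of_tauSim fun _ _ => tauSim_transGen hB⟩

end Closure

def WeakMutual (E : PRel) : PRel :=
  fun P Q => (∃ P', WeakTau P P' ∧ E P' Q) ∧ (∃ Q', WeakTau Q Q' ∧ E Q' P)

namespace WeakMutual

variable {E : PRel}

instance : Std.Symm (WeakMutual E) := ⟨fun _ _ h => h.symm⟩

lemma of_rel [Std.Symm E] {P Q : Term} (h : E P Q) : WeakMutual E P Q :=
  ⟨⟨P, .refl, h⟩, ⟨Q, .refl, symm h⟩⟩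

end WeakMutual

open WeakMutual in
lemma GoodAbs.weakMutual {E : PRel} [Std.Symm E] (hE : GoodAbs E) : GoodAbs (WeakMutual E) := by
  obtain ⟨hOn, hRefl, hEq, hExt, hCod, hBis⟩ := hE
  refine ⟨fun P Q ⟨⟨_, _, hP'Q⟩, ⟨_, _, hQ'P⟩⟩ => ⟨(hOn _ _ hQ'P).2, (hOn _ _ hP'Q).2⟩,
    fun P hP => of_rel (hRefl P hP), ?_, ⟨?_, ?_⟩, ?_, ?_⟩
  · rintro P Q ⟨⟨P', hPP', hP'Q⟩, ⟨Q', hQQ', hQ'P⟩⟩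
    exact ⟨fun hP => .of_weakTau hQQ' ((hEq _ _ hQ'P).2 hP),
      fun hQ => .of_weakTau hPP' ((hEq _ _ hP'Q).2 hQ)⟩
  · rintro L M P Q ⟨⟨L', hLL', hL'M⟩, ⟨M', hMM', hM'L⟩⟩ ⟨⟨P', hPP', hP'Q⟩, ⟨Q', hQQ', hQ'P⟩⟩
    exact ⟨⟨_, hLL'.par hPP', hExt.1 _ _ _ _ hL'M hP'Q⟩,
      ⟨_, hMM'.par hQQ', hExt.1 _ _ _ _ hM'L hQ'P⟩⟩
  · rintro P Q c ⟨⟨P', hPP', hP'Q⟩, ⟨Q', hQQ', hQ'P⟩⟩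
    exact ⟨⟨_, hPP'.res c, hExt.2 _ _ c hP'Q⟩, ⟨_, hQQ'.res c, hExt.2 _ _ c hQ'P⟩⟩
  · refine codivergent_of_divSim fun P Q ⟨⟨P₀, hPP₀, hP₀Q⟩, _⟩ => ?_
    exact (DivSim.mono (R := E) (fun _ _ => of_rel) (hCod P₀ Q hP₀Q).1).of_weakTau hPP₀
  · refine bisim_of_tauSim fun P Q ⟨⟨P₀, hPP₀, hP₀Q⟩, _⟩ => ?_
    exact (TauSim.mono (R := E) (fun _ _ => of_rel) (hBis P₀ Q hP₀Q).1).of_weakTau hPP₀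

/-- if P₀ —τ→ P₁ —τ→ ⋯ —τ→ Pₙ and Pₙ = P₀ (absolute equality),
then all the processes along the sequence are absolutely equal. -/
theorem inert_tau_sequence (n : ℕ) (f : ℕ → Term)
    (hstep : ∀ i < n, Tau (f i) (f (i + 1)))
    (heq : AbsEq (f n) (f 0)) :
    ∀ i ≤ n, ∀ j ≤ n, AbsEq (f i) (f j) := by
  obtain ⟨R, hR, hR0⟩ := heq
  have hBis : Bisim R := hR.2.2.2.2.2
  have hpath : ∀ {i j}, i ≤ j → j ≤ n → WeakTau (f i) (f j) := fun hij hjn =>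
    weakTau_of_tau_succ hij fun k hk => hstep k (hk.2.trans_le hjn)
  have hreach : ∀ i ≤ n, ∀ j ≤ n, ∃ A, WeakTau (f i) A ∧ TransGen (SymmGen R) A (f j) := by
    intro i hi j hj
    obtain ⟨A, hA, hAj⟩ := exists_weakTau_of_tauSim (fun P Q h => (hBis P Q h).1) hR0
      (hpath (Nat.zero_le j) hj)
    exact ⟨A, (hpath hi le_rfl).trans hA, .single (.of_rel hAj)⟩
  intro i hi j hj
  exact ⟨_, hR.transGen_symmGen.weakMutual, hreach i hi j hj, hreach j hj i hi⟩
end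

section
/- The π-bisimilarity ≃_π (extended to open π-terms by: S ≃_π T iff Sρ ≃_π Tρ for every assignment ρ with fv(S|T) ⊆ dom(ρ)) is closed under all operators of the π-calculus: it is preserved by input choice, output choice, composition, localization, match, mismatch, and guarded replication (e.g., if S ≃_π T then S|R ≃_π T|R, (c)S ≃_π (c)T, [p=q]S ≃_π [p=q]T, [p≠q]S ≃_π [p≠q]T, !π.S ≃_π !π.T, and ≃_π is preserved componentwise by the choice operators). -/
set_option linter.unusedVariables false

/-- A π-bisimulation: a codivergent (branching) bisimulation on π-processes in
which external actions are explicitly simulated in the branching style. -/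
def PiBisimGood (R : PRel) : Prop :=
  OnProc R ∧ Codivergent R ∧ Bisim R ∧
  (∀ P Q, R P Q →
    ((∀ ℓ Q', Step Q (.lab ℓ) Q' →
        ∃ P'' P', WeakTau P P'' ∧ Step P'' (.lab ℓ) P' ∧ R P'' Q ∧ R P' Q') ∧
     (∀ ℓ P', Step P (.lab ℓ) P' →
        ∃ Q'' Q', WeakTau Q Q'' ∧ Step Q'' (.lab ℓ) Q' ∧ R P Q'' ∧ R P' Q')))

/-- The π-bisimilarity ≃_π : the largest π-bisimulation. -/
def PiBisimilar (P Q : Term) : Prop := ∃ R : PRel, PiBisimGood R ∧ R P Q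

/-- Extension of ≃_π to open π-terms by closure under assignments. -/
def PiBisimilarOpen (S T : Term) : Prop :=
  ∀ ρ : ℕ → Name, PiBisimilar (S.assign ρ) (T.assign ρ)


/-! ### Auxiliary lemmas -/

namespace NV

lemma vars_sub (σ : ℕ → NV) (n : NV) (y : ℕ) :
    y ∈ (n.sub σ).vars ↔ ∃ x ∈ n.vars, y ∈ (σ x).vars := by
  cases n with
  | nm a => simp [sub, vars]
  | vr x => simp [sub, vars]

end NV

/-- σ produces a variable only as itself (no capture danger). -/
def TameSub (σ : ℕ → NV) : Prop := ∀ z w, σ z = NV.vr w → w = z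

lemma TameSub.update (hσ : TameSub σ) (x : ℕ) :
    TameSub (Function.update σ x (NV.vr x)) := by
  intro z w h
  rcases eq_or_ne z x with rfl | hz
  · exact ((by simpa [Function.update_self] using h : z = w)).symm
  · exact hσ z w (by simpa [Function.update_of_ne hz] using h)

namespace Term

lemma mem_fvar_applyVar (T : Term) : ∀ (σ : ℕ → NV), TameSub σ → ∀ y,
    y ∈ (T.applyVar σ).fvar ↔ ∃ x ∈ T.fvar, y ∈ (σ x).vars := by
  induction T with
  | nil => intro σ hσ y; simp [applyVar, fvar]
  | inp n x k Ts ih =>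
      intro σ hσ y
      simp only [applyVar, fvar, Set.mem_union, Set.mem_diff, Set.mem_iUnion,
        Set.mem_singleton_iff, NV.vars_sub]
      constructor
      · rintro (⟨z, hz, hy⟩ | ⟨⟨i, hi⟩, hyx⟩)
        · exact ⟨z, Or.inl hz, hy⟩
        · rcases (ih i _ (hσ.update x) y).1 hi with ⟨z, hz, hy⟩
          rcases eq_or_ne z x with rfl | hzx
          · exact absurd (by simpa [NV.vars, Function.update_self] using hy) hyx
          · rw [Function.update_of_ne hzx] at hy
            exact ⟨z, Or.inr ⟨⟨i, hz⟩, hzx⟩, hy⟩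
      · rintro ⟨z, hz | ⟨⟨i, hz⟩, hzx⟩, hy⟩
        · exact Or.inl ⟨z, hz, hy⟩
        · refine Or.inr ⟨⟨i, (ih i _ (hσ.update x) y).2
            ⟨z, hz, by rwa [Function.update_of_ne hzx]⟩⟩, ?_⟩
          intro hyx; subst hyx
          have := hσ z y ?_
          · exact hzx this.symm
          · cases h : σ z with
            | nm a => rw [h] at hy; simp [NV.vars] at hy
            | vr w => rw [h] at hy; simp [NV.vars] at hy; rw [hy]
      | out n k ms Ts ih =>
      intro σ hσ y
      simp only [applyVar, fvar, Set.mem_union, Set.mem_iUnion, NV.vars_sub]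
      constructor
      · rintro (⟨z, hz, hy⟩ | ⟨i, (h | h)⟩)
        · exact ⟨z, Or.inl hz, hy⟩
        · rcases h with ⟨z, hz, hy⟩
          exact ⟨z, Or.inr ⟨i, Or.inl hz⟩, hy⟩
        · rcases (ih i σ hσ y).1 h with ⟨z, hz, hy⟩
          exact ⟨z, Or.inr ⟨i, Or.inr hz⟩, hy⟩
      · rintro ⟨z, hz | ⟨i, hz | hz⟩, hy⟩
        · exact Or.inl ⟨z, hz, hy⟩
        · exact Or.inr ⟨i, Or.inl ⟨z, hz, hy⟩⟩
        · exact Or.inr ⟨i, Or.inr ((ih i σ hσ y).2 ⟨z, hz, hy⟩)⟩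
  | par S T ihS ihT =>
      intro σ hσ y
      simp only [applyVar, fvar, Set.mem_union, ihS σ hσ, ihT σ hσ]
      constructor
      · rintro (⟨z, hz, hy⟩ | ⟨z, hz, hy⟩)
        exacts [⟨z, Or.inl hz, hy⟩, ⟨z, Or.inr hz, hy⟩]
      · rintro ⟨z, hz | hz, hy⟩
        exacts [Or.inl ⟨z, hz, hy⟩, Or.inr ⟨z, hz, hy⟩]
  | res c T ih => intro σ hσ y; simpa [applyVar, fvar] using ih σ hσ y
  | mat p q T ih =>
      intro σ hσ y
      simp only [applyVar, fvar, Set.mem_union, ih σ hσ, NV.vars_sub]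
      constructor
      · rintro ((⟨z, hz, hy⟩ | ⟨z, hz, hy⟩) | ⟨z, hz, hy⟩)
        exacts [⟨z, Or.inl (Or.inl hz), hy⟩, ⟨z, Or.inl (Or.inr hz), hy⟩,
          ⟨z, Or.inr hz, hy⟩]
      · rintro ⟨z, (hz | hz) | hz, hy⟩
        exacts [Or.inl (Or.inl ⟨z, hz, hy⟩), Or.inl (Or.inr ⟨z, hz, hy⟩),
          Or.inr ⟨z, hz, hy⟩]
  | mis p q T ih =>
      intro σ hσ y
      simp only [applyVar, fvar, Set.mem_union, ih σ hσ, NV.vars_sub]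
      constructor
      · rintro ((⟨z, hz, hy⟩ | ⟨z, hz, hy⟩) | ⟨z, hz, hy⟩)
        exacts [⟨z, Or.inl (Or.inl hz), hy⟩, ⟨z, Or.inl (Or.inr hz), hy⟩,
          ⟨z, Or.inr hz, hy⟩]
      · rintro ⟨z, (hz | hz) | hz, hy⟩
        exacts [Or.inl (Or.inl ⟨z, hz, hy⟩), Or.inl (Or.inr ⟨z, hz, hy⟩),
          Or.inr ⟨z, hz, hy⟩]
  | repInp n x T ih =>
      intro σ hσ y
      simp only [applyVar, fvar, Set.mem_union, Set.mem_diff,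
        Set.mem_singleton_iff, NV.vars_sub]
      constructor
      · rintro (⟨z, hz, hy⟩ | ⟨hi, hyx⟩)
        · exact ⟨z, Or.inl hz, hy⟩
        · rcases (ih _ (hσ.update x) y).1 hi with ⟨z, hz, hy⟩
          rcases eq_or_ne z x with rfl | hzx
          · exact absurd (by simpa [NV.vars, Function.update_self] using hy) hyx
          · rw [Function.update_of_ne hzx] at hy
            exact ⟨z, Or.inr ⟨hz, hzx⟩, hy⟩
      · rintro ⟨z, hz | ⟨hz, hzx⟩, hy⟩
        · exact Or.inl ⟨z, hz, hy⟩
        · refine Or.inr ⟨(ih _ (hσ.update x) y).2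
            ⟨z, hz, by rwa [Function.update_of_ne hzx]⟩, ?_⟩
          intro hyx; subst hyx
          have := hσ z y ?_
          · exact hzx this.symm
          · cases h : σ z with
            | nm a => rw [h] at hy; simp [NV.vars] at hy
            | vr w => rw [h] at hy; simp [NV.vars] at hy; rw [hy]
  | repOut n m T ih =>
      intro σ hσ y
      simp only [applyVar, fvar, Set.mem_union, ih σ hσ, NV.vars_sub]
      constructor
      · rintro ((⟨z, hz, hy⟩ | ⟨z, hz, hy⟩) | ⟨z, hz, hy⟩)
        exacts [⟨z, Or.inl (Or.inl hz), hy⟩, ⟨z, Or.inl (Or.inr hz), hy⟩,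
          ⟨z, Or.inr hz, hy⟩]
      · rintro ⟨z, (hz | hz) | hz, hy⟩
        exacts [Or.inl (Or.inl ⟨z, hz, hy⟩), Or.inl (Or.inr ⟨z, hz, hy⟩),
          Or.inr ⟨z, hz, hy⟩]

end Term
namespace Term

lemma tame_asgn (ρ : ℕ → Name) : TameSub (fun y => NV.nm (ρ y)) := by
  intro z w h; cases h

lemma tame_subst1 (x : ℕ) (c : Name) :
    TameSub (fun y => if y = x then NV.nm c else NV.vr y) := by
  intro z w h
  by_cases hz : z = x
  · simp [hz] at h
  · simp [hz] at h; exact h.symm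

lemma closed_assign (T : Term) (ρ : ℕ → Name) : Closed (T.assign ρ) := by
  rw [Closed, Set.eq_empty_iff_forall_notMem]
  intro y hy
  rcases (mem_fvar_applyVar T _ (tame_asgn ρ) y).1 hy with ⟨z, _, hv⟩
  simp [NV.vars] at hv

lemma fvar_subst1 (T : Term) (x : ℕ) (c : Name) :
    (T.subst1 x c).fvar = T.fvar \ {x} := by
  ext y
  rw [subst1, mem_fvar_applyVar T _ (tame_subst1 x c) y]
  constructor
  · rintro ⟨z, hz, hy⟩
    by_cases h : z = x
    · simp [h] at hy; simp [NV.vars] at hy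
    · simp [h, NV.vars] at hy; subst hy; exact ⟨hz, h⟩
  · rintro ⟨hy, hx⟩
    exact ⟨y, hy, by simp [Set.mem_singleton_iff.not.1 hx, NV.vars]⟩

lemma closed_subst1 {T : Term} {x : ℕ} (h : T.fvar ⊆ {x}) (c : Name) :
    Closed (T.subst1 x c) := by
  rw [Closed, fvar_subst1, Set.eq_empty_iff_forall_notMem]
  rintro y ⟨hy, hx⟩
  exact hx (h hy)

end Term

lemma Closed.par {S T : Term} (hS : Closed S) (hT : Closed T) :
    Closed (Term.par S T) := by
  simp [Closed, Term.fvar] at *; exact ⟨hS, hT⟩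

lemma Closed.res {T : Term} (hT : Closed T) (c : Name) :
    Closed (Term.res c T) := by
  simpa [Closed, Term.fvar] using hT

lemma Closed.of_par_left {S T : Term} (h : Closed (Term.par S T)) : Closed S := by
  simp [Closed, Term.fvar, Set.union_empty_iff] at h; exact h.1

lemma Closed.of_par_right {S T : Term} (h : Closed (Term.par S T)) : Closed T := by
  simp [Closed, Term.fvar, Set.union_empty_iff] at h; exact h.2

lemma step_closed : ∀ {P : Term} {μ : Act} {P' : Term},
    Step P μ P' → Closed P → Closed P' := by
  intro P μ P' h
  induction h with
  | @inp a x k Ts i c =>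
      intro hP
      simp only [Closed, Term.fvar, NV.vars, Set.empty_union,
        Set.diff_eq_empty] at hP
      exact Term.closed_subst1 ((Set.subset_iUnion (fun j => (Ts j).fvar) i).trans hP.subset) c
  | @out a k ms Ts i c h =>
      intro hP
      simp only [Closed, Term.fvar, NV.vars, Set.empty_union,
        Set.iUnion_eq_empty, Set.union_empty_iff] at hP
      exact (hP i).2
  | parR _ ih => intro hP; exact (hP.of_par_left).par (ih hP.of_par_right)
  | parL _ ih => intro hP; exact (ih hP.of_par_left).par hP.of_par_right
  | commL _ _ ih1 ih2 =>
      intro hP; exact (ih1 hP.of_par_left).par (ih2 hP.of_par_right)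
  | commR _ _ ih1 ih2 =>
      intro hP; exact (ih1 hP.of_par_left).par (ih2 hP.of_par_right)
  | closeL _ _ ih1 ih2 =>
      intro hP; exact ((ih1 hP.of_par_left).par (ih2 hP.of_par_right)).res _
  | closeR _ _ ih1 ih2 =>
      intro hP; exact ((ih1 hP.of_par_left).par (ih2 hP.of_par_right)).res _
  | open_ _ ih => intro hP; exact ih (by simpa [Closed, Term.fvar] using hP)
  | resStep _ _ ih =>
      intro hP; exact (ih (by simpa [Closed, Term.fvar] using hP)).res _
  | matStep _ ih =>
      intro hP
      simp only [Closed, Term.fvar, NV.vars, Set.empty_union,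
        Set.union_empty_iff] at hP
      exact ih hP
  | misStep _ _ ih =>
      intro hP
      simp only [Closed, Term.fvar, NV.vars, Set.empty_union,
        Set.union_empty_iff] at hP
      exact ih hP
  | @repOutStep a b T =>
      intro hP
      have hT : Closed T := by
        simp only [Closed, Term.fvar, NV.vars, Set.empty_union,
          Set.union_empty_iff] at hP
        exact hP
      exact hT.par hP
  | @repInpStep a x T b =>
      intro hP
      have hT : T.fvar ⊆ {x} := by
        simp only [Closed, Term.fvar, NV.vars, Set.empty_union,
          Set.diff_eq_empty] at hP
        exact hP
      exact (Term.closed_subst1 hT b).par hP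

/-! ### Composition of substitutions -/

namespace Term

lemma _root_.NV.sub_sub {σ σ' τ : ℕ → NV} (hcomp : ∀ y, (σ y).sub σ' = τ y)
    (n : NV) : (n.sub σ).sub σ' = n.sub τ := by
  cases n with
  | nm a => rfl
  | vr z => exact hcomp z

lemma update_comp {σ σ' τ : ℕ → NV} (hcomp : ∀ y, (σ y).sub σ' = τ y)
    (hσ : TameSub σ) (x : ℕ) : ∀ y,
    ((Function.update σ x (NV.vr x) y).sub (Function.update σ' x (NV.vr x)))
      = Function.update τ x (NV.vr x) y := by
  intro y
  rcases eq_or_ne y x with rfl | hyx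
  · simp [Function.update_self, NV.sub]
  · rw [Function.update_of_ne hyx, Function.update_of_ne hyx, ← hcomp y]
    cases h : σ y with
    | nm a => simp [NV.sub]
    | vr w =>
        have : w = y := hσ y w h
        subst this
        simp [NV.sub, Function.update_of_ne hyx]

lemma applyVar_comp (T : Term) : ∀ (σ σ' τ : ℕ → NV),
    (∀ y, (σ y).sub σ' = τ y) → TameSub σ →
    (T.applyVar σ).applyVar σ' = T.applyVar τ := by
  induction T with
  | nil => intros; rfl
  | inp n x k Ts ih =>
      intro σ σ' τ hcomp hσ
      simp only [applyVar]
      rw [NV.sub_sub hcomp n]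
      congr 1
      funext i
      exact ih i _ _ _ (update_comp hcomp hσ x) (hσ.update x)
  | out n k ms Ts ih =>
      intro σ σ' τ hcomp hσ
      simp only [applyVar]
      rw [NV.sub_sub hcomp n]
      congr 1
      · funext i; exact NV.sub_sub hcomp (ms i)
      · funext i; exact ih i _ _ _ hcomp hσ
  | par S T ihS ihT =>
      intro σ σ' τ hcomp hσ
      simp only [applyVar]
      rw [ihS _ _ _ hcomp hσ, ihT _ _ _ hcomp hσ]
  | res c T ih =>
      intro σ σ' τ hcomp hσ
      simp only [applyVar]
      rw [ih _ _ _ hcomp hσ]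
  | mat p q T ih =>
      intro σ σ' τ hcomp hσ
      simp only [applyVar]
      rw [ih _ _ _ hcomp hσ, NV.sub_sub hcomp p, NV.sub_sub hcomp q]
  | mis p q T ih =>
      intro σ σ' τ hcomp hσ
      simp only [applyVar]
      rw [ih _ _ _ hcomp hσ, NV.sub_sub hcomp p, NV.sub_sub hcomp q]
  | repInp n x T ih =>
      intro σ σ' τ hcomp hσ
      simp only [applyVar]
      rw [NV.sub_sub hcomp n, ih _ _ _ (update_comp hcomp hσ x) (hσ.update x)]
  | repOut n m T ih =>
      intro σ σ' τ hcomp hσ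
      simp only [applyVar]
      rw [ih _ _ _ hcomp hσ, NV.sub_sub hcomp n, NV.sub_sub hcomp m]

/-- Key substitution lemma: substituting the bound variable after an assignment
equals assigning the updated assignment. -/
lemma subst1_assign (T : Term) (ρ : ℕ → Name) (x : ℕ) (c : Name) :
    (T.applyVar (Function.update (fun y => NV.nm (ρ y)) x (NV.vr x))).subst1 x c
      = T.assign (Function.update ρ x c) := by
  rw [subst1, assign]
  refine applyVar_comp T _ _ _ ?_ ((tame_asgn ρ).update x)
  intro y
  rcases eq_or_ne y x with rfl | hyx
  · simp [Function.update_self, NV.sub]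
  · simp [Function.update_of_ne hyx, NV.sub, hyx]

end Term
/-! ### Weak transition utilities -/

lemma weak_lift {g : Term → Term} (hg : ∀ {X Y}, Tau X Y → Tau (g X) (g Y))
    {A B : Term} (h : WeakTau A B) : WeakTau (g A) (g B) := by
  induction h with
  | refl => exact Relation.ReflTransGen.refl
  | tail _ h2 ih => exact ih.tail (hg h2)

lemma WeakTau.trans' {A B C : Term} (h1 : WeakTau A B) (h2 : WeakTau B C) :
    WeakTau A C := Relation.ReflTransGen.trans h1 h2

lemma WeakTau.single' {A B : Term} (h : Tau A B) : WeakTau A B :=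
  Relation.ReflTransGen.single h

lemma tauweak_of_weak_tau {A B C : Term} (h1 : WeakTau A B) (h2 : Tau B C) :
    TauWeak A C := by
  rcases (Relation.ReflTransGen.cases_head h1) with rfl | ⟨A₀, hA₀, hrest⟩
  · exact ⟨C, h2, Relation.ReflTransGen.refl⟩
  · exact ⟨A₀, hA₀, hrest.tail h2⟩

lemma tauweak_lift {g : Term → Term} (hg : ∀ {X Y}, Tau X Y → Tau (g X) (g Y))
    {A B : Term} (h : TauWeak A B) : TauWeak (g A) (g B) := by
  rcases h with ⟨A₀, h1, h2⟩
  exact ⟨g A₀, hg h1, weak_lift @hg h2⟩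

lemma tau_parL {M X Y : Term} (h : Tau X Y) : Tau (.par X M) (.par Y M) :=
  Step.parL h

lemma tau_parR {M X Y : Term} (h : Tau X Y) : Tau (.par M X) (.par M Y) :=
  Step.parR h

lemma tau_res {c : Name} {X Y : Term} (h : Tau X Y) :
    Tau (.res c X) (.res c Y) :=
  Step.resStep h (by simp [Act.names])

/-! ### The context closure of a base relation -/

inductive Ctx (B : PRel) : PRel
  | base {P Q} : B P Q → Ctx B P Q
  | par {P Q M N} : Ctx B P Q → Ctx B M N → Ctx B (.par P M) (.par Q N)
  | res {P Q} (c : Name) : Ctx B P Q → Ctx B (.res c P) (.res c Q)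

/-- Answer to a τ-challenge in the branching style. -/
def BisimAns (R : PRel) (P Q Q' : Term) : Prop :=
  (∃ P', WeakTau P P' ∧ R P' Q ∧ R P' Q') ∨
  (∃ P'' P', WeakTau P P'' ∧ R P'' Q ∧ Tau P'' P' ∧ R P' Q')

/-- Answer to an external challenge. -/
def LabAns (R : PRel) (P Q : Term) (ℓ : Label) (Q' : Term) : Prop :=
  ∃ P'' P', WeakTau P P'' ∧ Step P'' (.lab ℓ) P' ∧ R P'' Q ∧ R P' Q'

/-- Answer to a divergence challenge. -/
def CodivAns (R : PRel) (P : Term) (f : ℕ → Term) : Prop :=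
  ∃ k, 1 ≤ k ∧ ∃ P', TauWeak P P' ∧ R P' (f k)

structure GoodBase (B : PRel) : Prop where
  symm : ∀ P Q, B P Q → B Q P
  proc : ∀ P Q, B P Q → Closed P ∧ Closed Q
  bisim1 : ∀ P Q, B P Q → ∀ Q', Tau Q Q' → BisimAns (Ctx B) P Q Q'
  lab1 : ∀ P Q, B P Q → ∀ ℓ Q', Step Q (.lab ℓ) Q' → LabAns (Ctx B) P Q ℓ Q'
  codiv1 : ∀ P Q, B P Q → ∀ f, f 0 = Q → TauSeq f → CodivAns (Ctx B) P f

variable {B : PRel}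

lemma Ctx.symm (hB : GoodBase B) : ∀ {P Q}, Ctx B P Q → Ctx B Q P := by
  intro P Q h
  induction h with
  | base hb => exact Ctx.base (hB.symm _ _ hb)
  | par _ _ ih1 ih2 => exact Ctx.par ih1 ih2
  | res c _ ih => exact Ctx.res c ih

lemma Ctx.proc (hB : GoodBase B) : ∀ {P Q}, Ctx B P Q → Closed P ∧ Closed Q := by
  intro P Q h
  induction h with
  | base hb => exact hB.proc _ _ hb
  | par _ _ ih1 ih2 => exact ⟨ih1.1.par ih2.1, ih1.2.par ih2.2⟩
  | res c _ ih => exact ⟨ih.1.res c, ih.2.res c⟩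

/-- The main simulation lemma for the context closure. -/
theorem ctx_sim (hB : GoodBase B) : ∀ {P Q}, Ctx B P Q →
    (∀ Q', Tau Q Q' → BisimAns (Ctx B) P Q Q') ∧
    (∀ ℓ Q', Step Q (.lab ℓ) Q' → LabAns (Ctx B) P Q ℓ Q') := by
  intro P Q h
  induction h with
  | base hb => exact ⟨hB.bisim1 _ _ hb, hB.lab1 _ _ hb⟩
  | @par P Q M N hPQ hMN ih1 ih2 =>
      constructor
      · intro Q' hτ
        cases show Step (.par Q N) .tau Q' from hτ with
        | parR hN =>
            rename_i N'
            rcases ih2.1 _ hN with ⟨M₁, hw, hr1, hr2⟩ | ⟨M₂, M₃, hw, hr1, ht, hr2⟩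
            · exact Or.inl ⟨.par P M₁, weak_lift (fun h => tau_parR h) hw,
                Ctx.par hPQ hr1, Ctx.par hPQ hr2⟩
            · exact Or.inr ⟨.par P M₂, .par P M₃,
                weak_lift (fun h => tau_parR h) hw, Ctx.par hPQ hr1,
                tau_parR ht, Ctx.par hPQ hr2⟩
        | parL hQ =>
            rename_i Q₁
            rcases ih1.1 _ hQ with ⟨P₁, hw, hr1, hr2⟩ | ⟨P₂, P₃, hw, hr1, ht, hr2⟩
            · exact Or.inl ⟨.par P₁ M, weak_lift (fun h => tau_parL h) hw,
                Ctx.par hr1 hMN, Ctx.par hr2 hMN⟩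
            · exact Or.inr ⟨.par P₂ M, .par P₃ M,
                weak_lift (fun h => tau_parL h) hw, Ctx.par hr1 hMN,
                tau_parL ht, Ctx.par hr2 hMN⟩
        | commL hQ hN =>
            rcases ih1.2 _ _ hQ with ⟨P₂, P₃, w1, s1, r1, r2⟩
            rcases ih2.2 _ _ hN with ⟨M₂, M₃, w2, s2, r3, r4⟩
            refine Or.inr ⟨.par P₂ M₂, .par P₃ M₃, ?_, Ctx.par r1 r3,
              Step.commL s1 s2, Ctx.par r2 r4⟩
            exact (weak_lift (fun h => tau_parL h) w1).trans'
              (weak_lift (fun h => tau_parR h) w2)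
        | commR hQ hN =>
            rcases ih1.2 _ _ hQ with ⟨P₂, P₃, w1, s1, r1, r2⟩
            rcases ih2.2 _ _ hN with ⟨M₂, M₃, w2, s2, r3, r4⟩
            refine Or.inr ⟨.par P₂ M₂, .par P₃ M₃, ?_, Ctx.par r1 r3,
              Step.commR s1 s2, Ctx.par r2 r4⟩
            exact (weak_lift (fun h => tau_parL h) w1).trans'
              (weak_lift (fun h => tau_parR h) w2)
        | closeL hQ hN =>
            rcases ih1.2 _ _ hQ with ⟨P₂, P₃, w1, s1, r1, r2⟩
            rcases ih2.2 _ _ hN with ⟨M₂, M₃, w2, s2, r3, r4⟩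
            refine Or.inr ⟨.par P₂ M₂, .res _ (.par P₃ M₃), ?_, Ctx.par r1 r3,
              Step.closeL s1 s2, Ctx.res _ (Ctx.par r2 r4)⟩
            exact (weak_lift (fun h => tau_parL h) w1).trans'
              (weak_lift (fun h => tau_parR h) w2)
        | closeR hQ hN =>
            rcases ih1.2 _ _ hQ with ⟨P₂, P₃, w1, s1, r1, r2⟩
            rcases ih2.2 _ _ hN with ⟨M₂, M₃, w2, s2, r3, r4⟩
            refine Or.inr ⟨.par P₂ M₂, .res _ (.par P₃ M₃), ?_, Ctx.par r1 r3,
              Step.closeR s1 s2, Ctx.res _ (Ctx.par r2 r4)⟩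
            exact (weak_lift (fun h => tau_parL h) w1).trans'
              (weak_lift (fun h => tau_parR h) w2)
      · intro ℓ Q' hs
        cases hs with
        | parR hN =>
            rcases ih2.2 _ _ hN with ⟨M₂, M₃, w2, s2, r3, r4⟩
            exact ⟨.par P M₂, .par P M₃, weak_lift (fun h => tau_parR h) w2,
              Step.parR s2, Ctx.par hPQ r3, Ctx.par hPQ r4⟩
        | parL hQ =>
            rcases ih1.2 _ _ hQ with ⟨P₂, P₃, w1, s1, r1, r2⟩
            exact ⟨.par P₂ M, .par P₃ M, weak_lift (fun h => tau_parL h) w1,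
              Step.parL s1, Ctx.par r1 hMN, Ctx.par r2 hMN⟩
  | @res P Q c hPQ ih =>
      constructor
      · intro Q' hτ
        cases show Step (.res c Q) .tau Q' from hτ with
        | resStep hQ hc =>
            rename_i Q₁
            rcases ih.1 _ hQ with ⟨P₁, hw, hr1, hr2⟩ | ⟨P₂, P₃, hw, hr1, ht, hr2⟩
            · exact Or.inl ⟨.res c P₁, weak_lift (fun h => tau_res h) hw,
                Ctx.res c hr1, Ctx.res c hr2⟩
            · exact Or.inr ⟨.res c P₂, .res c P₃,
                weak_lift (fun h => tau_res h) hw, Ctx.res c hr1,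
                tau_res ht, Ctx.res c hr2⟩
      · intro ℓ Q' hs
        cases hs with
        | open_ hQ =>
            rcases ih.2 _ _ hQ with ⟨P₂, P₃, w1, s1, r1, r2⟩
            exact ⟨.res c P₂, P₃, weak_lift (fun h => tau_res h) w1,
              Step.open_ s1, Ctx.res c r1, r2⟩
        | resStep hQ hc =>
            rcases ih.2 _ _ hQ with ⟨P₂, P₃, w1, s1, r1, r2⟩
            exact ⟨.res c P₂, .res c P₃, weak_lift (fun h => tau_res h) w1,
              Step.resStep s1 hc, Ctx.res c r1, Ctx.res c r2⟩
/-! ### Codivergence of the context closure -/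

def pleft : Term → Term
  | .par a _ => a
  | t => t

def pright : Term → Term
  | .par _ b => b
  | t => t

@[simp] lemma pleft_par (a b : Term) : pleft (.par a b) = a := rfl
@[simp] lemma pright_par (a b : Term) : pright (.par a b) = b := rfl

/-- Extraction of the subsequence of indices where a projection moves. -/
lemma extract_run (f : ℕ → Term) (π : Term → Term) (LS : ℕ → Prop)
    (hstep : ∀ n, LS n → Tau (π (f n)) (π (f (n + 1))))
    (hstay : ∀ n, ¬ LS n → π (f (n + 1)) = π (f n))
    (hfreq : ∀ N, ∃ n, N ≤ n ∧ LS n) :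
    ∃ t : ℕ → ℕ, (∀ j, j ≤ t j) ∧ TauSeq (fun j => π (f (t j))) ∧
      π (f (t 0)) = π (f 0) := by
  classical
  let nxt : ℕ → ℕ := fun m => Nat.find (hfreq m)
  have hnxt1 : ∀ m, m ≤ nxt m ∧ LS (nxt m) := fun m => Nat.find_spec (hfreq m)
  have hnxt2 : ∀ m w, m ≤ w → w < nxt m → ¬ LS w :=
    fun m w hmw hw hls => Nat.find_min (hfreq m) hw ⟨hmw, hls⟩
  have const : ∀ a b, a ≤ b → (∀ m, a ≤ m → m < b → ¬ LS m) →
      π (f b) = π (f a) := by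
    intro a b hab
    induction b, hab using Nat.le_induction with
    | base => intro _; rfl
    | succ b hab ihb =>
        intro hmid
        rw [hstay b (hmid b hab (Nat.lt_succ_self b))]
        exact ihb (fun m h1 h2 => hmid m h1 (h2.trans (Nat.lt_succ_self b)))
  let t : ℕ → ℕ := fun j => Nat.rec (nxt 0) (fun _ p => nxt (p + 1)) j
  have ht0 : t 0 = nxt 0 := rfl
  have htS : ∀ j, t (j + 1) = nxt (t j + 1) := fun j => rfl
  have hLS : ∀ j, LS (t j) := by
    intro j
    cases j with
    | zero => exact (hnxt1 0).2
    | succ j => exact (hnxt1 (t j + 1)).2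
  have hmono : ∀ j, j ≤ t j := by
    intro j
    induction j with
    | zero => exact Nat.zero_le _
    | succ j ih =>
        have : t j + 1 ≤ t (j + 1) := by
          rw [htS j]; exact (hnxt1 (t j + 1)).1
        omega
  refine ⟨t, hmono, ?_, ?_⟩
  · intro j
    have h1 := hstep (t j) (hLS j)
    have h2 : π (f (t (j + 1))) = π (f (t j + 1)) := by
      rw [htS j]
      exact const _ _ (hnxt1 (t j + 1)).1 (hnxt2 (t j + 1))
    simpa [h2] using h1
  · rw [ht0]
    exact const 0 (nxt 0) (Nat.zero_le _) (fun m h1 h2 => hnxt2 0 m (Nat.zero_le m) h2)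

theorem ctx_codiv (hB : GoodBase B) : ∀ {P Q}, Ctx B P Q →
    ∀ f, f 0 = Q → TauSeq f → CodivAns (Ctx B) P f := by
  intro P Q h
  induction h with
  | base hb => exact fun f h0 hs => hB.codiv1 _ _ hb f h0 hs
  | @res P Q c hPQ ih =>
      intro f h0 hseq
      have shape : ∀ n, ∃ u, f n = .res c u := by
        intro n
        induction n with
        | zero => exact ⟨Q, h0⟩
        | succ n ihn =>
            rcases ihn with ⟨u, hu⟩
            have hs := hseq n
            rw [hu] at hs
            generalize hX : f (n + 1) = X at hs
            cases show Step (.res c u) .tau X from hs with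
            | resStep h hc => exact ⟨_, rfl⟩
      choose g hg using shape
      have hseq' : TauSeq g := by
        intro n
        have hs := hseq n
        rw [hg n, hg (n + 1)] at hs
        cases show Step (.res c (g n)) .tau (.res c (g (n + 1))) from hs with
        | resStep h hc => exact h
      have hg0 : g 0 = Q := by
        have h1 := h0.symm.trans (hg 0)
        injection h1 with h2 h3
        exact h3.symm
      rcases ih g hg0 hseq' with ⟨k, hk, P', hw, hrel⟩
      refine ⟨k, hk, .res c P', tauweak_lift (fun h => tau_res h) hw, ?_⟩
      rw [hg k]
      exact Ctx.res c hrel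
  | @par P Q M N hPQ hMN ih1 ih2 =>
      intro f h0 hseq
      by_contra hcon
      have resp : ∀ k, 1 ≤ k → ∀ P', TauWeak (.par P M) P' →
          Ctx B P' (f k) → False :=
        fun k hk P' hw hr => hcon ⟨k, hk, P', hw, hr⟩
      -- one-step analysis
      have key : ∀ n q m, f n = .par q m → Ctx B P q → Ctx B M m →
          ∃ q' m', f (n + 1) = .par q' m' ∧ Ctx B P q' ∧ Ctx B M m' ∧
            ((Tau q q' ∧ m' = m) ∨ (Tau m m' ∧ q' = q)) := by
        intro n q m hfn hPq hMm
        have hs := hseq n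
        rw [hfn] at hs
        generalize hX : f (n + 1) = X at hs
        have hge : 1 ≤ n + 1 := Nat.le_add_left 1 n
        cases show Step (.par q m) .tau X from hs with
        | parL hq =>
            rename_i q₁
            rcases (ctx_sim hB hPq).1 _ hq with ⟨P₁, hw, r1, r2⟩ |
              ⟨P₂, P₃, hw, r1, ht, r2⟩
            · rcases Relation.ReflTransGen.cases_head hw with rfl | ⟨P₀, hP₀, hrest⟩
              · exact ⟨q₁, m, rfl, r2, hMm, Or.inl ⟨hq, rfl⟩⟩
              · refine (resp (n + 1) hge (.par P₁ M)
                  ⟨.par P₀ M, tau_parL hP₀, weak_lift (fun h => tau_parL h) hrest⟩ ?_).elim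
                rw [hX]
                exact Ctx.par r2 hMm
            · refine (resp (n + 1) hge (.par P₃ M)
                (tauweak_of_weak_tau (weak_lift (fun h => tau_parL h) hw)
                  (tau_parL ht)) ?_).elim
              rw [hX]
              exact Ctx.par r2 hMm
        | parR hm =>
            rename_i m₁
            rcases (ctx_sim hB hMm).1 _ hm with ⟨M₁, hw, r1, r2⟩ |
              ⟨M₂, M₃, hw, r1, ht, r2⟩
            · rcases Relation.ReflTransGen.cases_head hw with rfl | ⟨M₀, hM₀, hrest⟩
              · exact ⟨q, m₁, rfl, hPq, r2, Or.inr ⟨hm, rfl⟩⟩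
              · refine (resp (n + 1) hge (.par P M₁)
                  ⟨.par P M₀, tau_parR hM₀, weak_lift (fun h => tau_parR h) hrest⟩ ?_).elim
                rw [hX]
                exact Ctx.par hPq r2
            · refine (resp (n + 1) hge (.par P M₃)
                (tauweak_of_weak_tau (weak_lift (fun h => tau_parR h) hw)
                  (tau_parR ht)) ?_).elim
              rw [hX]
              exact Ctx.par hPq r2
        | commL hq hm =>
            rcases (ctx_sim hB hPq).2 _ _ hq with ⟨P₂, P₃, w1, s1, r1, r2⟩
            rcases (ctx_sim hB hMm).2 _ _ hm with ⟨M₂, M₃, w2, s2, r3, r4⟩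
            refine (resp (n + 1) hge (.par P₃ M₃)
              (tauweak_of_weak_tau
                ((weak_lift (fun h => tau_parL h) w1).trans'
                  (weak_lift (fun h => tau_parR h) w2))
                (Step.commL s1 s2)) ?_).elim
            rw [hX]
            exact Ctx.par r2 r4
        | commR hq hm =>
            rcases (ctx_sim hB hPq).2 _ _ hq with ⟨P₂, P₃, w1, s1, r1, r2⟩
            rcases (ctx_sim hB hMm).2 _ _ hm with ⟨M₂, M₃, w2, s2, r3, r4⟩
            refine (resp (n + 1) hge (.par P₃ M₃)
              (tauweak_of_weak_tau
                ((weak_lift (fun h => tau_parL h) w1).trans'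
                  (weak_lift (fun h => tau_parR h) w2))
                (Step.commR s1 s2)) ?_).elim
            rw [hX]
            exact Ctx.par r2 r4
        | closeL hq hm =>
            rcases (ctx_sim hB hPq).2 _ _ hq with ⟨P₂, P₃, w1, s1, r1, r2⟩
            rcases (ctx_sim hB hMm).2 _ _ hm with ⟨M₂, M₃, w2, s2, r3, r4⟩
            refine (resp (n + 1) hge (.res _ (.par P₃ M₃))
              (tauweak_of_weak_tau
                ((weak_lift (fun h => tau_parL h) w1).trans'
                  (weak_lift (fun h => tau_parR h) w2))
                (Step.closeL s1 s2)) ?_).elim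
            rw [hX]
            exact Ctx.res _ (Ctx.par r2 r4)
        | closeR hq hm =>
            rcases (ctx_sim hB hPq).2 _ _ hq with ⟨P₂, P₃, w1, s1, r1, r2⟩
            rcases (ctx_sim hB hMm).2 _ _ hm with ⟨M₂, M₃, w2, s2, r3, r4⟩
            refine (resp (n + 1) hge (.res _ (.par P₃ M₃))
              (tauweak_of_weak_tau
                ((weak_lift (fun h => tau_parL h) w1).trans'
                  (weak_lift (fun h => tau_parR h) w2))
                (Step.closeR s1 s2)) ?_).elim
            rw [hX]
            exact Ctx.res _ (Ctx.par r2 r4)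
      -- global invariant
      have inv : ∀ n, (∃ q m, f n = .par q m) ∧ Ctx B P (pleft (f n)) ∧
          Ctx B M (pright (f n)) := by
        intro n
        induction n with
        | zero => exact ⟨⟨Q, N, h0⟩, by rw [h0]; simpa using hPQ,
            by rw [h0]; simpa using hMN⟩
        | succ n ihn =>
            rcases ihn with ⟨⟨q, m, hfn⟩, hq, hm⟩
            rw [hfn] at hq hm
            simp only [pleft_par, pright_par] at hq hm
            rcases key n q m hfn hq hm with ⟨q', m', hfn', hq', hm', _⟩
            exact ⟨⟨q', m', hfn'⟩, by rw [hfn']; simpa using hq',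
              by rw [hfn']; simpa using hm'⟩
      have sc : ∀ n,
          (Tau (pleft (f n)) (pleft (f (n + 1))) ∧
            pright (f (n + 1)) = pright (f n)) ∨
          (Tau (pright (f n)) (pright (f (n + 1))) ∧
            pleft (f (n + 1)) = pleft (f n)) := by
        intro n
        rcases inv n with ⟨⟨q, m, hfn⟩, hq, hm⟩
        rw [hfn] at hq hm
        simp only [pleft_par, pright_par] at hq hm
        rcases key n q m hfn hq hm with ⟨q', m', hfn', _, _, hcase⟩
        rw [hfn, hfn']
        simp only [pleft_par, pright_par]
        rcases hcase with ⟨h1, h2⟩ | ⟨h1, h2⟩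
        · exact Or.inl ⟨h1, h2⟩
        · exact Or.inr ⟨h1, h2⟩
      -- frequency dichotomy
      set LS : ℕ → Prop := fun n => Tau (pleft (f n)) (pleft (f (n + 1))) ∧
        pright (f (n + 1)) = pright (f n) with hLSdef
      have hfreq : (∀ N, ∃ n, N ≤ n ∧ LS n) ∨
          (∀ N, ∃ n, N ≤ n ∧ ¬ LS n ∧ Tau (pright (f n)) (pright (f (n + 1))) ∧
            pleft (f (n + 1)) = pleft (f n)) := by
        by_contra hboth
        push_neg at hboth
        rcases hboth with ⟨⟨N₁, hN₁⟩, ⟨N₂, hN₂⟩⟩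
        rcases sc (max N₁ N₂) with h | h
        · exact hN₁ (max N₁ N₂) (le_max_left _ _) h
        · by_cases hls : LS (max N₁ N₂)
          · exact hN₁ (max N₁ N₂) (le_max_left _ _) hls
          · exact hN₂ (max N₁ N₂) (le_max_right _ _) hls h.1 h.2
      rcases hfreq with hfr | hfr
      · -- left component diverges
        rcases extract_run f pleft LS
          (fun n hn => hn.1)
          (fun n hn => by
            rcases sc n with h | h
            · exact absurd h hn
            · exact h.2)
          hfr with ⟨t, hmono, hseqg, hg0⟩
        have hg0' : pleft (f (t 0)) = Q := by rw [hg0, h0]; simp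
        rcases ih1 (fun j => pleft (f (t j))) hg0' hseqg with ⟨k, hk, P', hw, hrel⟩
        rcases inv (t k) with ⟨⟨q, m, hfn⟩, _, hm⟩
        refine resp (t k) (hk.trans (hmono k)) (.par P' M)
          (tauweak_lift (fun h => tau_parL h) hw) ?_
        have hrel' : Ctx B P' (pleft (f (t k))) := hrel
        rw [hfn] at hrel' hm
        simp only [pleft_par, pright_par] at hrel' hm
        rw [hfn]
        exact Ctx.par hrel' hm
      · -- right component diverges
        rcases extract_run f pright (fun n => ¬ LS n ∧
            Tau (pright (f n)) (pright (f (n + 1))) ∧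
            pleft (f (n + 1)) = pleft (f n))
          (fun n hn => hn.2.1)
          (fun n hn => by
            rcases sc n with h | h
            · exact h.2
            · by_cases hls : LS n
              · exact hls.2
              · exact absurd ⟨hls, h.1, h.2⟩ hn)
          hfr with ⟨t, hmono, hseqg, hg0⟩
        have hg0' : pright (f (t 0)) = N := by rw [hg0, h0]; simp
        rcases ih2 (fun j => pright (f (t j))) hg0' hseqg with ⟨k, hk, M', hw, hrel⟩
        rcases inv (t k) with ⟨⟨q, m, hfn⟩, hq, _⟩
        refine resp (t k) (hk.trans (hmono k)) (.par P M')
          (tauweak_lift (fun h => tau_parR h) hw) ?_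
        have hrel' : Ctx B M' (pright (f (t k))) := hrel
        rw [hfn] at hrel' hq
        simp only [pleft_par, pright_par] at hrel' hq
        rw [hfn]
        exact Ctx.par hq hrel'
/-! ### The context closure is a π-bisimulation -/

theorem ctx_good (hB : GoodBase B) : PiBisimGood (Ctx B) := by
  refine ⟨?_, ?_, ?_, ?_⟩
  · intro P Q h
    exact Ctx.proc hB h
  · intro P Q h
    constructor
    · intro f h0 hs
      exact ctx_codiv hB h f h0 hs
    · intro f h0 hs
      exact ctx_codiv hB (h.symm hB) f h0 hs
  · intro P Q h
    constructor
    · intro Q' hτ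
      exact (ctx_sim hB h).1 Q' hτ
    · intro P' hτ
      rcases (ctx_sim hB (h.symm hB)).1 P' hτ with ⟨Q₁, hw, r1, r2⟩ |
        ⟨Q₂, Q₃, hw, r1, ht, r2⟩
      · exact Or.inl ⟨Q₁, hw, r1.symm hB, r2.symm hB⟩
      · exact Or.inr ⟨Q₂, Q₃, hw, r1.symm hB, ht, r2.symm hB⟩
  · intro P Q h
    constructor
    · intro ℓ Q' hs
      exact (ctx_sim hB h).2 ℓ Q' hs
    · intro ℓ P' hs
      rcases (ctx_sim hB (h.symm hB)).2 ℓ P' hs with ⟨Q₂, Q₃, hw, hst, r1, r2⟩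
      exact ⟨Q₂, Q₃, hw, hst, r1.symm hB, r2.symm hB⟩

/-! ### Basic facts about π-bisimilarity -/

theorem pi_good : PiBisimGood PiBisimilar := by
  refine ⟨?_, ?_, ?_, ?_⟩
  · rintro P Q ⟨R, hR, hPQ⟩
    exact hR.1 P Q hPQ
  · rintro P Q ⟨R, hR, hPQ⟩
    constructor
    · intro f h0 hs
      rcases (hR.2.1 P Q hPQ).1 f h0 hs with ⟨k, hk, P', hw, hr⟩
      exact ⟨k, hk, P', hw, R, hR, hr⟩
    · intro f h0 hs
      rcases (hR.2.1 P Q hPQ).2 f h0 hs with ⟨k, hk, Q', hw, hr⟩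
      exact ⟨k, hk, Q', hw, R, hR, hr⟩
  · rintro P Q ⟨R, hR, hPQ⟩
    constructor
    · intro Q' hτ
      rcases (hR.2.2.1 P Q hPQ).1 Q' hτ with ⟨P', hw, r1, r2⟩ |
        ⟨P'', P', hw, r1, ht, r2⟩
      · exact Or.inl ⟨P', hw, ⟨R, hR, r1⟩, ⟨R, hR, r2⟩⟩
      · exact Or.inr ⟨P'', P', hw, ⟨R, hR, r1⟩, ht, ⟨R, hR, r2⟩⟩
    · intro P' hτ
      rcases (hR.2.2.1 P Q hPQ).2 P' hτ with ⟨Q', hw, r1, r2⟩ |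
        ⟨Q'', Q', hw, r1, ht, r2⟩
      · exact Or.inl ⟨Q', hw, ⟨R, hR, r1⟩, ⟨R, hR, r2⟩⟩
      · exact Or.inr ⟨Q'', Q', hw, ⟨R, hR, r1⟩, ht, ⟨R, hR, r2⟩⟩
  · rintro P Q ⟨R, hR, hPQ⟩
    constructor
    · intro ℓ Q' hs
      rcases (hR.2.2.2 P Q hPQ).1 ℓ Q' hs with ⟨P'', P', hw, hst, r1, r2⟩
      exact ⟨P'', P', hw, hst, ⟨R, hR, r1⟩, ⟨R, hR, r2⟩⟩
    · intro ℓ P' hs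
      rcases (hR.2.2.2 P Q hPQ).2 ℓ P' hs with ⟨Q'', Q', hw, hst, r1, r2⟩
      exact ⟨Q'', Q', hw, hst, ⟨R, hR, r1⟩, ⟨R, hR, r2⟩⟩

theorem pi_symm {P Q : Term} (h : PiBisimilar P Q) : PiBisimilar Q P := by
  rcases h with ⟨R, hR, hPQ⟩
  refine ⟨fun X Y => R X Y ∨ R Y X, ⟨?_, ?_, ?_, ?_⟩, Or.inr hPQ⟩
  · rintro X Y (h | h)
    · exact hR.1 X Y h
    · exact ⟨(hR.1 Y X h).2, (hR.1 Y X h).1⟩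
  · rintro X Y (h | h)
    · constructor
      · intro f h0 hs
        rcases (hR.2.1 X Y h).1 f h0 hs with ⟨k, hk, X', hw, hr⟩
        exact ⟨k, hk, X', hw, Or.inl hr⟩
      · intro f h0 hs
        rcases (hR.2.1 X Y h).2 f h0 hs with ⟨k, hk, Y', hw, hr⟩
        exact ⟨k, hk, Y', hw, Or.inl hr⟩
    · constructor
      · intro f h0 hs
        rcases (hR.2.1 Y X h).2 f h0 hs with ⟨k, hk, X', hw, hr⟩
        exact ⟨k, hk, X', hw, Or.inl hr⟩
      · intro f h0 hs
        rcases (hR.2.1 Y X h).1 f h0 hs with ⟨k, hk, Y', hw, hr⟩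
        exact ⟨k, hk, Y', hw, Or.inl hr⟩
  · rintro X Y (h | h)
    · constructor
      · intro Y' hτ
        rcases (hR.2.2.1 X Y h).1 Y' hτ with ⟨X', hw, r1, r2⟩ |
          ⟨X'', X', hw, r1, ht, r2⟩
        · exact Or.inl ⟨X', hw, Or.inl r1, Or.inl r2⟩
        · exact Or.inr ⟨X'', X', hw, Or.inl r1, ht, Or.inl r2⟩
      · intro X' hτ
        rcases (hR.2.2.1 X Y h).2 X' hτ with ⟨Y', hw, r1, r2⟩ |
          ⟨Y'', Y', hw, r1, ht, r2⟩
        · exact Or.inl ⟨Y', hw, Or.inl r1, Or.inl r2⟩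
        · exact Or.inr ⟨Y'', Y', hw, Or.inl r1, ht, Or.inl r2⟩
    · constructor
      · intro Y' hτ
        rcases (hR.2.2.1 Y X h).2 Y' hτ with ⟨X', hw, r1, r2⟩ |
          ⟨X'', X', hw, r1, ht, r2⟩
        · exact Or.inl ⟨X', hw, Or.inr r1, Or.inr r2⟩
        · exact Or.inr ⟨X'', X', hw, Or.inr r1, ht, Or.inr r2⟩
      · intro X' hτ
        rcases (hR.2.2.1 Y X h).1 X' hτ with ⟨Y', hw, r1, r2⟩ |
          ⟨Y'', Y', hw, r1, ht, r2⟩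
        · exact Or.inl ⟨Y', hw, Or.inr r1, Or.inr r2⟩
        · exact Or.inr ⟨Y'', Y', hw, Or.inr r1, ht, Or.inr r2⟩
  · rintro X Y (h | h)
    · constructor
      · intro ℓ Y' hs
        rcases (hR.2.2.2 X Y h).1 ℓ Y' hs with ⟨X'', X', hw, hst, r1, r2⟩
        exact ⟨X'', X', hw, hst, Or.inl r1, Or.inl r2⟩
      · intro ℓ X' hs
        rcases (hR.2.2.2 X Y h).2 ℓ X' hs with ⟨Y'', Y', hw, hst, r1, r2⟩
        exact ⟨Y'', Y', hw, hst, Or.inl r1, Or.inl r2⟩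
    · constructor
      · intro ℓ Y' hs
        rcases (hR.2.2.2 Y X h).2 ℓ Y' hs with ⟨X'', X', hw, hst, r1, r2⟩
        exact ⟨X'', X', hw, hst, Or.inr r1, Or.inr r2⟩
      · intro ℓ X' hs
        rcases (hR.2.2.2 Y X h).1 ℓ X' hs with ⟨Y'', Y', hw, hst, r1, r2⟩
        exact ⟨Y'', Y', hw, hst, Or.inr r1, Or.inr r2⟩

/-- Reflexivity on processes. -/
theorem pi_refl {P : Term} (hP : Closed P) : PiBisimilar P P := by
  refine ⟨fun X Y => X = Y ∧ Closed X, ⟨?_, ?_, ?_, ?_⟩, rfl, hP⟩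
  · rintro X Y ⟨rfl, hX⟩
    exact ⟨hX, hX⟩
  · rintro X Y ⟨rfl, hX⟩
    constructor
    · intro f h0 hs
      refine ⟨1, le_refl 1, f 1, ⟨f 1, ?_, Relation.ReflTransGen.refl⟩, rfl, ?_⟩
      · rw [← h0]; exact hs 0
      · subst h0; exact step_closed (hs 0) hX
    · intro f h0 hs
      refine ⟨1, le_refl 1, f 1, ⟨f 1, ?_, Relation.ReflTransGen.refl⟩, rfl, ?_⟩
      · rw [← h0]; exact hs 0
      · subst h0; exact step_closed (hs 0) hX
  · rintro X Y ⟨rfl, hX⟩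
    constructor
    · intro Y' hτ
      exact Or.inr ⟨X, Y', Relation.ReflTransGen.refl, ⟨rfl, hX⟩, hτ,
        rfl, step_closed hτ hX⟩
    · intro X' hτ
      exact Or.inr ⟨X, X', Relation.ReflTransGen.refl, ⟨rfl, hX⟩, hτ,
        rfl, step_closed hτ hX⟩
  · rintro X Y ⟨rfl, hX⟩
    constructor
    · intro ℓ Y' hs
      exact ⟨X, Y', Relation.ReflTransGen.refl, hs, ⟨rfl, hX⟩,
        rfl, step_closed hs hX⟩
    · intro ℓ X' hs
      exact ⟨X, X', Relation.ReflTransGen.refl, hs, ⟨rfl, hX⟩,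
        rfl, step_closed hs hX⟩

lemma pi_closed {P Q : Term} (h : PiBisimilar P Q) : Closed P ∧ Closed Q :=
  pi_good.1 P Q h

/-- GoodBase instance for π-bisimilarity itself. -/
lemma gb_pi : GoodBase PiBisimilar := by
  refine ⟨fun P Q h => pi_symm h, fun P Q h => pi_closed h, ?_, ?_, ?_⟩
  · intro P Q h Q' hτ
    rcases (pi_good.2.2.1 P Q h).1 Q' hτ with ⟨P', hw, r1, r2⟩ |
      ⟨P'', P', hw, r1, ht, r2⟩
    · exact Or.inl ⟨P', hw, Ctx.base r1, Ctx.base r2⟩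
    · exact Or.inr ⟨P'', P', hw, Ctx.base r1, ht, Ctx.base r2⟩
  · intro P Q h ℓ Q' hs
    rcases (pi_good.2.2.2 P Q h).1 ℓ Q' hs with ⟨P'', P', hw, hst, r1, r2⟩
    exact ⟨P'', P', hw, hst, Ctx.base r1, Ctx.base r2⟩
  · intro P Q h f h0 hs
    rcases (pi_good.2.1 P Q h).1 f h0 hs with ⟨k, hk, P', hw, hr⟩
    exact ⟨k, hk, P', hw, Ctx.base hr⟩
/-! ### Congruence combinators -/

theorem pi_par {P Q M N : Term} (h1 : PiBisimilar P Q) (h2 : PiBisimilar M N) :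
    PiBisimilar (.par P M) (.par Q N) :=
  ⟨Ctx PiBisimilar, ctx_good gb_pi, Ctx.par (Ctx.base h1) (Ctx.base h2)⟩

theorem pi_res (c : Name) {P Q : Term} (h : PiBisimilar P Q) :
    PiBisimilar (.res c P) (.res c Q) :=
  ⟨Ctx PiBisimilar, ctx_good gb_pi, Ctx.res c (Ctx.base h)⟩

/-- Two inert processes are π-bisimilar. -/
theorem pi_inert {A A' : Term} (h1 : ∀ μ X, ¬ Step A μ X)
    (h2 : ∀ μ X, ¬ Step A' μ X) (c1 : Closed A) (c2 : Closed A') :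
    PiBisimilar A A' := by
  refine ⟨fun X Y => (X = A ∧ Y = A') ∨ (X = A' ∧ Y = A), ⟨?_, ?_, ?_, ?_⟩,
    Or.inl ⟨rfl, rfl⟩⟩
  · rintro X Y (⟨rfl, rfl⟩ | ⟨rfl, rfl⟩)
    · exact ⟨c1, c2⟩
    · exact ⟨c2, c1⟩
  · rintro X Y (⟨rfl, rfl⟩ | ⟨rfl, rfl⟩) <;> constructor <;> intro f h0 hs
    · exact absurd (h0 ▸ hs 0) (h2 _ _)
    · exact absurd (h0 ▸ hs 0) (h1 _ _)
    · exact absurd (h0 ▸ hs 0) (h1 _ _)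
    · exact absurd (h0 ▸ hs 0) (h2 _ _)
  · rintro X Y (⟨rfl, rfl⟩ | ⟨rfl, rfl⟩) <;> constructor <;> intro Z hτ
    · exact absurd hτ (h2 _ _)
    · exact absurd hτ (h1 _ _)
    · exact absurd hτ (h1 _ _)
    · exact absurd hτ (h2 _ _)
  · rintro X Y (⟨rfl, rfl⟩ | ⟨rfl, rfl⟩) <;> constructor <;> intro ℓ Z hst
    · exact absurd hst (h2 _ _)
    · exact absurd hst (h1 _ _)
    · exact absurd hst (h1 _ _)
    · exact absurd hst (h2 _ _)

/-- π-bisimilarity is preserved by "transparent" unary contexts. -/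
theorem pi_wrap {W : Term → Term}
    (hw : ∀ T μ X, Step (W T) μ X ↔ Step T μ X)
    (hc : ∀ T, Closed T → Closed (W T))
    {P Q : Term} (h : PiBisimilar P Q) : PiBisimilar (W P) (W Q) := by
  set B : PRel := fun X Y => PiBisimilar X Y ∨
    (∃ P₀, X = W P₀ ∧ PiBisimilar P₀ Y) ∨
    (∃ Q₀, Y = W Q₀ ∧ PiBisimilar X Q₀) ∨
    (∃ P₀ Q₀, X = W P₀ ∧ Y = W Q₀ ∧ PiBisimilar P₀ Q₀) with hBdef
  have d1 : ∀ {X Y}, PiBisimilar X Y → B X Y := fun h => Or.inl h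
  have d2 : ∀ {P₀ Y}, PiBisimilar P₀ Y → B (W P₀) Y :=
    fun h => Or.inr (Or.inl ⟨_, rfl, h⟩)
  have d3 : ∀ {X Q₀}, PiBisimilar X Q₀ → B X (W Q₀) :=
    fun h => Or.inr (Or.inr (Or.inl ⟨_, rfl, h⟩))
  have d4 : ∀ {P₀ Q₀}, PiBisimilar P₀ Q₀ → B (W P₀) (W Q₀) :=
    fun h => Or.inr (Or.inr (Or.inr ⟨_, _, rfl, rfl, h⟩))
  have tauW : ∀ {X Y}, Tau X Y → Tau (W X) Y := fun h => (hw _ _ _).2 h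
  have tauW' : ∀ {X Y}, Tau (W X) Y → Tau X Y := fun h => (hw _ _ _).1 h
  -- lift a weak move of the inner process to a weak move of the wrapped one,
  -- leaving the wrapper at the first real step
  have liftw : ∀ {X Y}, WeakTau X Y → WeakTau (W X) Y ∨ (Y = X) := by
    intro X Y hwk
    rcases Relation.ReflTransGen.cases_head hwk with rfl | ⟨X₀, hX₀, hrest⟩
    · exact Or.inr rfl
    · exact Or.inl (Relation.ReflTransGen.head (tauW hX₀) hrest)
  have hGB : GoodBase B := by
    refine ⟨?_, ?_, ?_, ?_, ?_⟩
    · rintro X Y (hb | ⟨P₀, rfl, hb⟩ | ⟨Q₀, rfl, hb⟩ | ⟨P₀, Q₀, rfl, rfl, hb⟩)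
      · exact d1 (pi_symm hb)
      · exact d3 (pi_symm hb)
      · exact d2 (pi_symm hb)
      · exact d4 (pi_symm hb)
    · rintro X Y (hb | ⟨P₀, rfl, hb⟩ | ⟨Q₀, rfl, hb⟩ | ⟨P₀, Q₀, rfl, rfl, hb⟩)
      · exact pi_closed hb
      · exact ⟨hc _ (pi_closed hb).1, (pi_closed hb).2⟩
      · exact ⟨(pi_closed hb).1, hc _ (pi_closed hb).2⟩
      · exact ⟨hc _ (pi_closed hb).1, hc _ (pi_closed hb).2⟩
    · rintro X Y (hb | ⟨P₀, rfl, hb⟩ | ⟨Q₀, rfl, hb⟩ | ⟨P₀, Q₀, rfl, rfl, hb⟩) <;>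
        intro Q' hτ
      · rcases (pi_good.2.2.1 _ _ hb).1 Q' hτ with ⟨P', hwk, r1, r2⟩ |
          ⟨P'', P', hwk, r1, ht, r2⟩
        · exact Or.inl ⟨P', hwk, Ctx.base (d1 r1), Ctx.base (d1 r2)⟩
        · exact Or.inr ⟨P'', P', hwk, Ctx.base (d1 r1), ht, Ctx.base (d1 r2)⟩
      · rcases (pi_good.2.2.1 _ _ hb).1 Q' hτ with ⟨P', hwk, r1, r2⟩ |
          ⟨P'', P', hwk, r1, ht, r2⟩
        · rcases liftw hwk with hl | rfl
          · exact Or.inl ⟨P', hl, Ctx.base (d1 r1), Ctx.base (d1 r2)⟩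
          · exact Or.inl ⟨W P', Relation.ReflTransGen.refl,
              Ctx.base (d2 r1), Ctx.base (d2 r2)⟩
        · rcases liftw hwk with hl | rfl
          · exact Or.inr ⟨P'', P', hl, Ctx.base (d1 r1), ht, Ctx.base (d1 r2)⟩
          · exact Or.inr ⟨W P'', P', Relation.ReflTransGen.refl,
              Ctx.base (d2 r1), tauW ht, Ctx.base (d1 r2)⟩
      · rcases (pi_good.2.2.1 _ _ hb).1 Q' (tauW' hτ) with ⟨P', hwk, r1, r2⟩ |
          ⟨P'', P', hwk, r1, ht, r2⟩
        · exact Or.inl ⟨P', hwk, Ctx.base (d3 r1), Ctx.base (d1 r2)⟩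
        · exact Or.inr ⟨P'', P', hwk, Ctx.base (d3 r1), ht, Ctx.base (d1 r2)⟩
      · rcases (pi_good.2.2.1 _ _ hb).1 Q' (tauW' hτ) with ⟨P', hwk, r1, r2⟩ |
          ⟨P'', P', hwk, r1, ht, r2⟩
        · rcases liftw hwk with hl | rfl
          · exact Or.inl ⟨P', hl, Ctx.base (d3 r1), Ctx.base (d1 r2)⟩
          · exact Or.inl ⟨W P', Relation.ReflTransGen.refl,
              Ctx.base (d4 r1), Ctx.base (d2 r2)⟩
        · rcases liftw hwk with hl | rfl
          · exact Or.inr ⟨P'', P', hl, Ctx.base (d3 r1), ht, Ctx.base (d1 r2)⟩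
          · exact Or.inr ⟨W P'', P', Relation.ReflTransGen.refl,
              Ctx.base (d4 r1), tauW ht, Ctx.base (d1 r2)⟩
    · rintro X Y (hb | ⟨P₀, rfl, hb⟩ | ⟨Q₀, rfl, hb⟩ | ⟨P₀, Q₀, rfl, rfl, hb⟩) <;>
        intro ℓ Q' hst
      · rcases (pi_good.2.2.2 _ _ hb).1 ℓ Q' hst with ⟨P'', P', hwk, hs', r1, r2⟩
        exact ⟨P'', P', hwk, hs', Ctx.base (d1 r1), Ctx.base (d1 r2)⟩
      · rcases (pi_good.2.2.2 _ _ hb).1 ℓ Q' hst with ⟨P'', P', hwk, hs', r1, r2⟩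
        rcases liftw hwk with hl | rfl
        · exact ⟨P'', P', hl, hs', Ctx.base (d1 r1), Ctx.base (d1 r2)⟩
        · exact ⟨W P'', P', Relation.ReflTransGen.refl, (hw _ _ _).2 hs',
            Ctx.base (d2 r1), Ctx.base (d1 r2)⟩
      · rcases (pi_good.2.2.2 _ _ hb).1 ℓ Q' ((hw _ _ _).1 hst) with
          ⟨P'', P', hwk, hs', r1, r2⟩
        exact ⟨P'', P', hwk, hs', Ctx.base (d3 r1), Ctx.base (d1 r2)⟩
      · rcases (pi_good.2.2.2 _ _ hb).1 ℓ Q' ((hw _ _ _).1 hst) with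
          ⟨P'', P', hwk, hs', r1, r2⟩
        rcases liftw hwk with hl | rfl
        · exact ⟨P'', P', hl, hs', Ctx.base (d3 r1), Ctx.base (d1 r2)⟩
        · exact ⟨W P'', P', Relation.ReflTransGen.refl, (hw _ _ _).2 hs',
            Ctx.base (d4 r1), Ctx.base (d1 r2)⟩
    · rintro X Y (hb | ⟨P₀, rfl, hb⟩ | ⟨Q₀, rfl, hb⟩ | ⟨P₀, Q₀, rfl, rfl, hb⟩) <;>
        intro f h0 hs
      · rcases (pi_good.2.1 _ _ hb).1 f h0 hs with ⟨k, hk, P', htw, hr⟩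
        exact ⟨k, hk, P', htw, Ctx.base (d1 hr)⟩
      · rcases (pi_good.2.1 _ _ hb).1 f h0 hs with ⟨k, hk, P', htw, hr⟩
        rcases htw with ⟨P₁, ht1, hrest⟩
        exact ⟨k, hk, P', ⟨P₁, tauW ht1, hrest⟩, Ctx.base (d1 hr)⟩
      · -- run from W Q₀ : shift the sequence
        have hg : TauSeq (fun n => if n = 0 then Q₀ else f n) := by
          intro n
          cases n with
          | zero =>
              simp only [if_pos rfl, Nat.one_ne_zero, if_neg]
              exact tauW' (h0 ▸ hs 0)
          | succ n =>
              simp only [Nat.succ_ne_zero, if_neg]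
              exact hs (n + 1)
        rcases (pi_good.2.1 _ _ hb).1 _ (if_pos rfl) hg with ⟨k, hk, P', htw, hr⟩
        rw [if_neg (by omega : ¬ k = 0)] at hr
        exact ⟨k, hk, P', htw, Ctx.base (d1 hr)⟩
      · have hg : TauSeq (fun n => if n = 0 then Q₀ else f n) := by
          intro n
          cases n with
          | zero =>
              simp only [if_pos rfl, Nat.one_ne_zero, if_neg]
              exact tauW' (h0 ▸ hs 0)
          | succ n =>
              simp only [Nat.succ_ne_zero, if_neg]
              exact hs (n + 1)
        rcases (pi_good.2.1 _ _ hb).1 _ (if_pos rfl) hg with ⟨k, hk, P', htw, hr⟩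
        rw [if_neg (by omega : ¬ k = 0)] at hr
        rcases htw with ⟨P₁, ht1, hrest⟩
        exact ⟨k, hk, P', ⟨P₁, tauW ht1, hrest⟩, Ctx.base (d1 hr)⟩
  exact ⟨Ctx B, ctx_good hGB, Ctx.base (d4 h)⟩

/-- Bisimilarity of a pair of guarded processes which unfold, by matching
labelled transitions, into context-related processes. -/
theorem gb_pair {A A' : Term} (c1 : Closed A) (c2 : Closed A')
    (hτ1 : ∀ X, ¬ Tau A X) (hτ2 : ∀ X, ¬ Tau A' X)
    (hl1 : ∀ ℓ X, Step A' (.lab ℓ) X → ∃ Y, Step A (.lab ℓ) Y ∧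
      Ctx (fun X Y => PiBisimilar X Y ∨ (X = A ∧ Y = A') ∨ (X = A' ∧ Y = A)) Y X)
    (hl2 : ∀ ℓ X, Step A (.lab ℓ) X → ∃ Y, Step A' (.lab ℓ) Y ∧
      Ctx (fun X Y => PiBisimilar X Y ∨ (X = A ∧ Y = A') ∨ (X = A' ∧ Y = A)) Y X) :
    PiBisimilar A A' := by
  set B : PRel := fun X Y => PiBisimilar X Y ∨ (X = A ∧ Y = A') ∨
    (X = A' ∧ Y = A) with hBdef
  have hGB : GoodBase B := by
    refine ⟨?_, ?_, ?_, ?_, ?_⟩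
    · rintro X Y (hb | ⟨rfl, rfl⟩ | ⟨rfl, rfl⟩)
      · exact Or.inl (pi_symm hb)
      · exact Or.inr (Or.inr ⟨rfl, rfl⟩)
      · exact Or.inr (Or.inl ⟨rfl, rfl⟩)
    · rintro X Y (hb | ⟨rfl, rfl⟩ | ⟨rfl, rfl⟩)
      · exact pi_closed hb
      · exact ⟨c1, c2⟩
      · exact ⟨c2, c1⟩
    · rintro X Y (hb | ⟨rfl, rfl⟩ | ⟨rfl, rfl⟩) <;> intro Q' hτ
      · rcases (pi_good.2.2.1 _ _ hb).1 Q' hτ with ⟨P', hwk, r1, r2⟩ |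
          ⟨P'', P', hwk, r1, ht, r2⟩
        · exact Or.inl ⟨P', hwk, Ctx.base (Or.inl r1), Ctx.base (Or.inl r2)⟩
        · exact Or.inr ⟨P'', P', hwk, Ctx.base (Or.inl r1), ht,
            Ctx.base (Or.inl r2)⟩
      · exact absurd hτ (hτ2 _)
      · exact absurd hτ (hτ1 _)
    · rintro X Y (hb | ⟨rfl, rfl⟩ | ⟨rfl, rfl⟩) <;> intro ℓ Q' hst
      · rcases (pi_good.2.2.2 _ _ hb).1 ℓ Q' hst with ⟨P'', P', hwk, hs', r1, r2⟩
        exact ⟨P'', P', hwk, hs', Ctx.base (Or.inl r1), Ctx.base (Or.inl r2)⟩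
      · rcases hl1 ℓ Q' hst with ⟨Y, hsY, hctx⟩
        exact ⟨_, Y, Relation.ReflTransGen.refl, hsY,
          Ctx.base (Or.inr (Or.inl ⟨rfl, rfl⟩)), hctx⟩
      · rcases hl2 ℓ Q' hst with ⟨Y, hsY, hctx⟩
        exact ⟨_, Y, Relation.ReflTransGen.refl, hsY,
          Ctx.base (Or.inr (Or.inr ⟨rfl, rfl⟩)), hctx⟩
    · rintro X Y (hb | ⟨rfl, rfl⟩ | ⟨rfl, rfl⟩) <;> intro f h0 hs
      · rcases (pi_good.2.1 _ _ hb).1 f h0 hs with ⟨k, hk, P', htw, hr⟩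
        exact ⟨k, hk, P', htw, Ctx.base (Or.inl hr)⟩
      · exact absurd (h0 ▸ hs 0) (hτ2 _)
      · exact absurd (h0 ▸ hs 0) (hτ1 _)
  exact ⟨Ctx B, ctx_good hGB, Ctx.base (Or.inr (Or.inl ⟨rfl, rfl⟩))⟩
lemma sub_asgn_nm (n : NV) (ρ : ℕ → Name) :
    ∃ a, n.sub (fun y => NV.nm (ρ y)) = NV.nm a := by
  cases n with
  | nm a => exact ⟨a, rfl⟩
  | vr v => exact ⟨ρ v, rfl⟩

theorem pi_bisimilarity_congruence' :
    (∀ (n : NV) (x k : ℕ) (Ss Ts : Fin k → Term),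
        (∀ i, PiBisimilarOpen (Ss i) (Ts i)) →
        PiBisimilarOpen (.inp n x k Ss) (.inp n x k Ts)) ∧
    (∀ (n : NV) (k : ℕ) (ms : Fin k → NV) (Ss Ts : Fin k → Term),
        (∀ i, PiBisimilarOpen (Ss i) (Ts i)) →
        PiBisimilarOpen (.out n k ms Ss) (.out n k ms Ts)) ∧
    (∀ S T R : Term, PiBisimilarOpen S T → PiBisimilarOpen (.par S R) (.par T R)) ∧
    (∀ S T R : Term, PiBisimilarOpen S T → PiBisimilarOpen (.par R S) (.par R T)) ∧
    (∀ (S T : Term) (c : Name), PiBisimilarOpen S T → PiBisimilarOpen (.res c S) (.res c T)) ∧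
    (∀ (S T : Term) (p q : NV), PiBisimilarOpen S T → PiBisimilarOpen (.mat p q S) (.mat p q T)) ∧
    (∀ (S T : Term) (p q : NV), PiBisimilarOpen S T → PiBisimilarOpen (.mis p q S) (.mis p q T)) ∧
    (∀ (S T : Term) (n : NV) (x : ℕ),
        PiBisimilarOpen S T → PiBisimilarOpen (.repInp n x S) (.repInp n x T)) ∧
    (∀ (S T : Term) (n m : NV),
        PiBisimilarOpen S T → PiBisimilarOpen (.repOut n m S) (.repOut n m T)) := by
  refine ⟨?_, ?_, ?_, ?_, ?_, ?_, ?_, ?_, ?_⟩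
  · -- input choice
    intro n x k Ss Ts hST ρ
    obtain ⟨a, ha⟩ := sub_asgn_nm n ρ
    have e : ∀ Us : Fin k → Term, (Term.inp n x k Us).assign ρ =
        Term.inp (NV.nm a) x k (fun i => (Us i).applyVar
          (Function.update (fun y => NV.nm (ρ y)) x (NV.vr x))) := by
      intro Us
      simp only [Term.assign, Term.applyVar]
      rw [ha]
    rw [e Ss, e Ts]
    refine gb_pair ?_ ?_ ?_ ?_ ?_ ?_
    · rw [← e Ss]; exact Term.closed_assign _ ρ
    · rw [← e Ts]; exact Term.closed_assign _ ρ
    · intro X h; cases h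
    · intro X h; cases h
    · intro ℓ X h
      cases h with
      | inp i c =>
          refine ⟨_, Step.inp i c, Ctx.base (Or.inl ?_)⟩
          rw [Term.subst1_assign, Term.subst1_assign]
          exact hST i (Function.update ρ x c)
    · intro ℓ X h
      cases h with
      | inp i c =>
          refine ⟨_, Step.inp i c, Ctx.base (Or.inl ?_)⟩
          rw [Term.subst1_assign, Term.subst1_assign]
          exact pi_symm (hST i (Function.update ρ x c))
  · -- output choice
    intro n k ms Ss Ts hST ρ
    obtain ⟨a, ha⟩ := sub_asgn_nm n ρ
    have e : ∀ Us : Fin k → Term, (Term.out n k ms Us).assign ρ =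
        Term.out (NV.nm a) k (fun i => (ms i).sub (fun y => NV.nm (ρ y)))
          (fun i => (Us i).applyVar (fun y => NV.nm (ρ y))) := by
      intro Us
      simp only [Term.assign, Term.applyVar]
      rw [ha]
    rw [e Ss, e Ts]
    refine gb_pair ?_ ?_ ?_ ?_ ?_ ?_
    · rw [← e Ss]; exact Term.closed_assign _ ρ
    · rw [← e Ts]; exact Term.closed_assign _ ρ
    · intro X h; cases h
    · intro X h; cases h
    · intro ℓ X h
      cases h with
      | out i hmi => exact ⟨_, Step.out i hmi, Ctx.base (Or.inl (hST i ρ))⟩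
    · intro ℓ X h
      cases h with
      | out i hmi =>
          exact ⟨_, Step.out i hmi, Ctx.base (Or.inl (pi_symm (hST i ρ)))⟩
  · -- parallel (left)
    intro S T R hST ρ
    exact pi_par (hST ρ) (pi_refl (Term.closed_assign R ρ))
  · -- parallel (right)
    intro S T R hST ρ
    exact pi_par (pi_refl (Term.closed_assign R ρ)) (hST ρ)
  · -- localization
    intro S T c hST ρ
    exact pi_res c (hST ρ)
  · -- match
    intro S T p q hST ρ
    obtain ⟨a, hpa⟩ := sub_asgn_nm p ρ
    obtain ⟨b, hqb⟩ := sub_asgn_nm q ρ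
    have e : ∀ U : Term, (Term.mat p q U).assign ρ =
        Term.mat (NV.nm a) (NV.nm b) (U.assign ρ) := by
      intro U
      simp only [Term.assign, Term.applyVar]
      rw [hpa, hqb]
    rw [e S, e T]
    by_cases hab : a = b
    · subst hab
      refine pi_wrap (W := fun U => Term.mat (NV.nm a) (NV.nm a) U) ?_ ?_ (hST ρ)
      · intro U μ X
        constructor
        · intro h
          cases h with
          | matStep h' => exact h'
        · intro h
          exact Step.matStep h
      · intro U hU
        simpa [Closed, Term.fvar, NV.vars] using hU
    · refine pi_inert ?_ ?_ ?_ ?_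
      · intro μ X h
        cases h with
        | matStep h' => exact hab rfl
      · intro μ X h
        cases h with
        | matStep h' => exact hab rfl
      · simpa [Closed, Term.fvar, NV.vars] using Term.closed_assign S ρ
      · simpa [Closed, Term.fvar, NV.vars] using Term.closed_assign T ρ
  · -- mismatch
    intro S T p q hST ρ
    obtain ⟨a, hpa⟩ := sub_asgn_nm p ρ
    obtain ⟨b, hqb⟩ := sub_asgn_nm q ρ
    have e : ∀ U : Term, (Term.mis p q U).assign ρ =
        Term.mis (NV.nm a) (NV.nm b) (U.assign ρ) := by
      intro U
      simp only [Term.assign, Term.applyVar]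
      rw [hpa, hqb]
    rw [e S, e T]
    by_cases hab : a = b
    · subst hab
      refine pi_inert ?_ ?_ ?_ ?_
      · intro μ X h
        cases h with
        | misStep hne h' => exact hne rfl
      · intro μ X h
        cases h with
        | misStep hne h' => exact hne rfl
      · simpa [Closed, Term.fvar, NV.vars] using Term.closed_assign S ρ
      · simpa [Closed, Term.fvar, NV.vars] using Term.closed_assign T ρ
    · refine pi_wrap (W := fun U => Term.mis (NV.nm a) (NV.nm b) U) ?_ ?_ (hST ρ)
      · intro U μ X
        constructor
        · intro h
          cases h with
          | misStep hne h' => exact h'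
        · intro h
          exact Step.misStep hab h
      · intro U hU
        simpa [Closed, Term.fvar, NV.vars] using hU
  · -- guarded replication (input)
    intro S T n x hST ρ
    obtain ⟨a, ha⟩ := sub_asgn_nm n ρ
    have e : ∀ U : Term, (Term.repInp n x U).assign ρ =
        Term.repInp (NV.nm a) x (U.applyVar
          (Function.update (fun y => NV.nm (ρ y)) x (NV.vr x))) := by
      intro U
      simp only [Term.assign, Term.applyVar]
      rw [ha]
    rw [e S, e T]
    refine gb_pair ?_ ?_ ?_ ?_ ?_ ?_
    · rw [← e S]; exact Term.closed_assign _ ρ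
    · rw [← e T]; exact Term.closed_assign _ ρ
    · intro X h; cases h
    · intro X h; cases h
    · intro ℓ X h
      cases h with
      | repInpStep b =>
          refine ⟨_, Step.repInpStep b, Ctx.par (Ctx.base (Or.inl ?_))
            (Ctx.base (Or.inr (Or.inl ⟨rfl, rfl⟩)))⟩
          rw [Term.subst1_assign, Term.subst1_assign]
          exact hST (Function.update ρ x b)
    · intro ℓ X h
      cases h with
      | repInpStep b =>
          refine ⟨_, Step.repInpStep b, Ctx.par (Ctx.base (Or.inl ?_))
            (Ctx.base (Or.inr (Or.inr ⟨rfl, rfl⟩)))⟩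
          rw [Term.subst1_assign, Term.subst1_assign]
          exact pi_symm (hST (Function.update ρ x b))
  · -- guarded replication (output)
    intro S T n m hST ρ
    obtain ⟨a, ha⟩ := sub_asgn_nm n ρ
    obtain ⟨b, hb⟩ := sub_asgn_nm m ρ
    have e : ∀ U : Term, (Term.repOut n m U).assign ρ =
        Term.repOut (NV.nm a) (NV.nm b) (U.applyVar (fun y => NV.nm (ρ y))) := by
      intro U
      simp only [Term.assign, Term.applyVar]
      rw [ha, hb]
    rw [e S, e T]
    refine gb_pair ?_ ?_ ?_ ?_ ?_ ?_
    · rw [← e S]; exact Term.closed_assign _ ρ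
    · rw [← e T]; exact Term.closed_assign _ ρ
    · intro X h; cases h
    · intro X h; cases h
    · intro ℓ X h
      cases h with
      | repOutStep =>
          exact ⟨_, Step.repOutStep, Ctx.par (Ctx.base (Or.inl (hST ρ)))
            (Ctx.base (Or.inr (Or.inl ⟨rfl, rfl⟩)))⟩
    · intro ℓ X h
      cases h with
      | repOutStep =>
          exact ⟨_, Step.repOutStep, Ctx.par (Ctx.base (Or.inl (pi_symm (hST ρ))))
            (Ctx.base (Or.inr (Or.inr ⟨rfl, rfl⟩)))⟩

/-- the π-bisimilarity (extended to open terms by assignment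
closure) is closed under all the operators of the π-calculus. -/
theorem pi_bisimilarity_congruence :
    (∀ (n : NV) (x k : ℕ) (Ss Ts : Fin k → Term),
        (∀ i, PiBisimilarOpen (Ss i) (Ts i)) →
        PiBisimilarOpen (.inp n x k Ss) (.inp n x k Ts)) ∧
    (∀ (n : NV) (k : ℕ) (ms : Fin k → NV) (Ss Ts : Fin k → Term),
        (∀ i, PiBisimilarOpen (Ss i) (Ts i)) →
        PiBisimilarOpen (.out n k ms Ss) (.out n k ms Ts)) ∧
    (∀ S T R : Term, PiBisimilarOpen S T → PiBisimilarOpen (.par S R) (.par T R)) ∧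
    (∀ S T R : Term, PiBisimilarOpen S T → PiBisimilarOpen (.par R S) (.par R T)) ∧
    (∀ (S T : Term) (c : Name), PiBisimilarOpen S T → PiBisimilarOpen (.res c S) (.res c T)) ∧
    (∀ (S T : Term) (p q : NV), PiBisimilarOpen S T → PiBisimilarOpen (.mat p q S) (.mat p q T)) ∧
    (∀ (S T : Term) (p q : NV), PiBisimilarOpen S T → PiBisimilarOpen (.mis p q S) (.mis p q T)) ∧
    (∀ (S T : Term) (n : NV) (x : ℕ),
        PiBisimilarOpen S T → PiBisimilarOpen (.repInp n x S) (.repInp n x T)) ∧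
    (∀ (S T : Term) (n m : NV),
        PiBisimilarOpen S T → PiBisimilarOpen (.repOut n m S) (.repOut n m T)) := by
  exact pi_bisimilarity_congruence'
end
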